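/- arXiv:math-ph/0103027 — 9 statements merged into one kernel-verified Lean document; each statement's English description precedes it below -/
import Mathlib

section
/- Let f : ℝ → ℂ be differentiable on all of ℝ with both f and its derivative f' square-integrable. Then for every x ∈ ℝ one has |f(x)| ≤ (1/√2)·‖f‖_{W^{1,2}}, where ‖f‖_{W^{1,2}} := (∫_ℝ |f(t)|² dt + ∫_ℝ |f'(t)|² dt)^{1/2}. -/
open MeasureTheory

/-- The Sobolev `W^{1,2}` norm of a differentiable function `f : ℝ → ℂ`. -/
noncomputable def W12norm (f : ℝ → ℂ) : ℝ :=
  Real.sqrt ((∫ t : ℝ, ‖f t‖ ^ 2) + (∫ t : ℝ, ‖deriv f t‖ ^ 2))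

theorem stmt1 (f : ℝ → ℂ) (hf : Differentiable ℝ f)
    (h2 : Integrable (fun t => ‖f t‖ ^ 2))
    (h2' : Integrable (fun t => ‖deriv f t‖ ^ 2)) :
    ∀ x : ℝ, ‖f x‖ ≤ (1 / Real.sqrt 2) * W12norm f := by
  intro x
  set g : ℝ → ℝ := fun t => ‖f t‖ ^ 2 with hgdef
  set g' : ℝ → ℝ := fun t => 2 * ((starRingEnd ℂ) (f t) * deriv f t).re with hg'def
  -- derivative of g
  have hd : ∀ t, HasDerivAt g (g' t) t := by
    intro t
    have h1 : HasDerivAt f (deriv f t) t := (hf t).hasDerivAt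
    have hu : HasDerivAt (fun s => (f s).re) ((deriv f t).re) t :=
      (Complex.reCLM.hasFDerivAt.comp_hasDerivAt t h1)
    have hv : HasDerivAt (fun s => (f s).im) ((deriv f t).im) t :=
      (Complex.imCLM.hasFDerivAt.comp_hasDerivAt t h1)
    have h3 : HasDerivAt (fun s => (f s).re ^ 2 + (f s).im ^ 2)
        (2 * (f t).re * (deriv f t).re + 2 * (f t).im * (deriv f t).im) t := by
      have := ((hu.pow 2).add (hv.pow 2))
      exact this.congr_deriv (by ring)
    have heq : (fun s => (f s).re ^ 2 + (f s).im ^ 2) = g := by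
      funext s
      rw [hgdef]
      simp only [Complex.sq_norm, Complex.normSq_apply]
      ring
    rw [heq] at h3
    convert h3 using 1
    simp [hg'def, Complex.mul_re]
    ring
  -- pointwise bound on g'
  have hbound : ∀ t, ‖g' t‖ ≤ ‖f t‖ ^ 2 + ‖deriv f t‖ ^ 2 := by
    intro t
    have h1 : |((starRingEnd ℂ) (f t) * deriv f t).re| ≤ ‖f t‖ * ‖deriv f t‖ := by
      calc |((starRingEnd ℂ) (f t) * deriv f t).re| ≤ ‖(starRingEnd ℂ) (f t) * deriv f t‖ :=
            Complex.abs_re_le_norm _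
        _ = ‖f t‖ * ‖deriv f t‖ := by simp
    have h2'' : 2 * (‖f t‖ * ‖deriv f t‖) ≤ ‖f t‖ ^ 2 + ‖deriv f t‖ ^ 2 := by
      nlinarith [sq_nonneg (‖f t‖ - ‖deriv f t‖)]
    calc ‖g' t‖ = 2 * |((starRingEnd ℂ) (f t) * deriv f t).re| := by
          simp [hg'def, abs_mul]
      _ ≤ 2 * (‖f t‖ * ‖deriv f t‖) := by linarith
      _ ≤ ‖f t‖ ^ 2 + ‖deriv f t‖ ^ 2 := h2''
  -- integrability of g'
  have hg'meas : AEStronglyMeasurable g' (volume : Measure ℝ) := by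
    apply Measurable.aestronglyMeasurable
    apply Measurable.mul measurable_const
    apply Complex.measurable_re.comp
    exact (((continuous_star.comp hf.continuous).measurable).mul (measurable_deriv f))
  have hg'int : Integrable g' := by
    refine Integrable.mono' (h2.add h2') hg'meas ?_
    filter_upwards with t using hbound t
  -- limits at infinity
  have htop : Filter.Tendsto g Filter.atTop (nhds 0) :=
    tendsto_zero_of_hasDerivAt_of_integrableOn_Ioi (a := 0) (fun t _ => hd t)
      hg'int.integrableOn h2.integrableOn
  have hbot : Filter.Tendsto g Filter.atBot (nhds 0) :=
    tendsto_zero_of_hasDerivAt_of_integrableOn_Iic (a := 0) (fun t _ => hd t)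
      hg'int.integrableOn h2.integrableOn
  -- FTC on both half-lines
  have I1 : ∫ t in Set.Iic x, g' t = g x - 0 :=
    integral_Iic_of_hasDerivAt_of_tendsto' (fun t _ => hd t) hg'int.integrableOn hbot
  have I2 : ∫ t in Set.Ioi x, g' t = 0 - g x :=
    integral_Ioi_of_hasDerivAt_of_tendsto' (fun t _ => hd t) hg'int.integrableOn htop
  have key : 2 * g x ≤ (∫ t : ℝ, ‖f t‖ ^ 2) + (∫ t : ℝ, ‖deriv f t‖ ^ 2) := by
    have e1 : (∫ t in Set.Iic x, g' t) ≤ ∫ t in Set.Iic x, ‖g' t‖ := by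
      apply integral_mono hg'int.integrableOn hg'int.norm.integrableOn
      intro t; exact le_abs_self _
    have e2 : (- ∫ t in Set.Ioi x, g' t) ≤ ∫ t in Set.Ioi x, ‖g' t‖ := by
      rw [← integral_neg]
      exact integral_mono hg'int.neg.integrableOn hg'int.norm.integrableOn
        (fun t => neg_le_abs _)
    have e3 : (∫ t in Set.Iic x, ‖g' t‖) + (∫ t in Set.Ioi x, ‖g' t‖) = ∫ t : ℝ, ‖g' t‖ :=
      intervalIntegral.integral_Iic_add_Ioi hg'int.norm.integrableOn hg'int.norm.integrableOn
    have e4 : (∫ t : ℝ, ‖g' t‖) ≤ (∫ t : ℝ, ‖f t‖ ^ 2 + ‖deriv f t‖ ^ 2) :=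
      integral_mono hg'int.norm (h2.add h2') hbound
    have e5 : (∫ t : ℝ, ‖f t‖ ^ 2 + ‖deriv f t‖ ^ 2)
        = (∫ t : ℝ, ‖f t‖ ^ 2) + (∫ t : ℝ, ‖deriv f t‖ ^ 2) := integral_add h2 h2'
    have : 2 * g x = (∫ t in Set.Iic x, g' t) + (- ∫ t in Set.Ioi x, g' t) := by
      rw [I1, I2]; ring
    linarith
  -- conclusion
  set A := (∫ t : ℝ, ‖f t‖ ^ 2) + (∫ t : ℝ, ‖deriv f t‖ ^ 2) with hA
  have hgx : 0 ≤ g x := sq_nonneg _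
  have hA0 : 0 ≤ A := by linarith
  have hfx2 : ‖f x‖ ^ 2 ≤ A / 2 := by
    have : g x = ‖f x‖ ^ 2 := rfl
    linarith
  have : ‖f x‖ ≤ Real.sqrt (A / 2) := by
    rw [← Real.sqrt_sq (norm_nonneg (f x))]
    exact Real.sqrt_le_sqrt hfx2
  calc ‖f x‖ ≤ Real.sqrt (A / 2) := this
    _ = (1 / Real.sqrt 2) * W12norm f := by
        rw [W12norm, ← hA, Real.sqrt_div hA0, one_div, inv_mul_eq_div]
end

section
/- Fix β > 0. There exists a₀ > 0 such that for every a ∈ (0, a₀) no κ > 0 satisfies (2a − β)·e^{−2κa} = 2a − β + 2βκa, and no κ > 0 satisfies e^{−2κa}·(2a − β)·(β − 2κa²) = (2a − β + 2βκa)·(β + 2κa²). -/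
theorem stmt3 (β : ℝ) (hβ : 0 < β) :
    ∃ a₀ > (0 : ℝ), ∀ a : ℝ, 0 < a → a < a₀ →
      (∀ κ : ℝ, 0 < κ →
          (2 * a - β) * Real.exp (-2 * κ * a) ≠ 2 * a - β + 2 * β * κ * a) ∧
      (∀ κ : ℝ, 0 < κ →
          Real.exp (-2 * κ * a) * (2 * a - β) * (β - 2 * κ * a ^ 2) ≠
            (2 * a - β + 2 * β * κ * a) * (β + 2 * κ * a ^ 2)) := by
  refine ⟨β / 4, by positivity, fun a ha ha4 => ⟨?_, ?_⟩⟩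
  · intro κ hκ h
    have hexp : -2 * κ * a + 1 ≤ Real.exp (-2 * κ * a) := Real.add_one_le_exp _
    have hpos : 0 < Real.exp (-2 * κ * a) := Real.exp_pos _
    nlinarith [mul_pos hκ ha, mul_pos (mul_pos hκ ha) ha]
  · intro κ hκ h
    have hexp : -2 * κ * a + 1 ≤ Real.exp (-2 * κ * a) := Real.add_one_le_exp _
    have hpos : 0 < Real.exp (-2 * κ * a) := Real.exp_pos _
    have hlt1 : Real.exp (-2 * κ * a) < 1 := by
      rw [Real.exp_lt_one_iff]; nlinarith [mul_pos hκ ha]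
    rcases lt_or_ge (2 * κ * a ^ 2) β with hc | hc
    · have hneg : (2 * a - β) * (β - 2 * κ * a ^ 2) ≤ 0 := by nlinarith
      have key : Real.exp (-2 * κ * a) * ((2 * a - β) * (β - 2 * κ * a ^ 2)) ≤
          (-2 * κ * a + 1) * ((2 * a - β) * (β - 2 * κ * a ^ 2)) :=
        mul_le_mul_of_nonpos_right hexp hneg
      nlinarith [key, mul_pos (mul_pos hκ ha) (mul_pos ha ha),
        mul_pos (mul_pos (mul_pos hκ hκ) (mul_pos ha ha)) (mul_pos ha (show (0:ℝ) < β - a by nlinarith))]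
    · have hs : 4 < 2 * κ * a := by nlinarith
      have hnn : 0 ≤ (β - 2 * a) * (2 * κ * a ^ 2 - β) := by nlinarith
      have key : Real.exp (-2 * κ * a) * ((β - 2 * a) * (2 * κ * a ^ 2 - β)) ≤
          1 * ((β - 2 * a) * (2 * κ * a ^ 2 - β)) :=
        mul_le_mul_of_nonneg_right hlt1.le hnn
      have h1 : (β - 2 * a) * (2 * κ * a ^ 2 - β) ≤ β * (2 * κ * a ^ 2) := by
        nlinarith [mul_nonneg ha.le (sub_nonneg.2 hc)]
      have h2 : β * (2 * κ * a ^ 2) * 3 < (2 * a - β + 2 * β * κ * a) * (β + 2 * κ * a ^ 2) := by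
        have hF : 0 < 2 * β * κ * a - 4 * β + 2 * a := by nlinarith
        have ht : 0 < 2 * κ * a ^ 2 := by positivity
        nlinarith [mul_pos hF ht, mul_pos hF hβ, mul_pos (mul_pos hκ ha) ha]
      nlinarith [key, h1, h2, mul_pos (mul_pos hκ ha) ha]
end

section
/- Fix κ > 0 and β ∈ ℝ \ {0}. Define, for a > 0 with 2a ≠ β, u(a) := 2βκa/(2a − β), v(a) := 2κa²/β, w(a) := e^{−κa}, and N(a) := (w(a)² + w(a)^{−2})·[w(a)² − (1 + u(a))(1 + v(a))] + 2w(a)²v(a) + (w(a)² − 1 − u(a))·(u(a) − 1 − w(a)²). Then there exist C > 0 and a₀ ∈ (0, |β|/2) such that |N(a) − 4κ⁴·a⁴| ≤ C·a⁵ for all a ∈ (0, a₀); i.e., N(a) = 4κ⁴a⁴ + O(a⁵) as a → 0⁺. -/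
/-- `u(a) = 2βκa/(2a − β)`. -/
noncomputable def uFun (β κ a : ℝ) : ℝ := 2 * β * κ * a / (2 * a - β)

/-- `v(a) = 2κa²/β`. -/
noncomputable def vFun (β κ a : ℝ) : ℝ := 2 * κ * a ^ 2 / β

/-- `w(a) = e^{−κa}`. -/
noncomputable def wFun (κ a : ℝ) : ℝ := Real.exp (-κ * a)

/-- The numerator `N(a)` from the triple-δ resolvent computation (same-side case). -/
noncomputable def NFun (β κ a : ℝ) : ℝ :=
  ((wFun κ a) ^ 2 + (wFun κ a)⁻¹ ^ 2) *
      ((wFun κ a) ^ 2 - (1 + uFun β κ a) * (1 + vFun β κ a)) +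
    2 * (wFun κ a) ^ 2 * vFun β κ a +
    ((wFun κ a) ^ 2 - 1 - uFun β κ a) * (uFun β κ a - 1 - (wFun κ a) ^ 2)

/-- Degree-4 Taylor polynomial of `e^{-2κa}`. -/
noncomputable def pE (κ a : ℝ) : ℝ :=
  1 - 2*(κ*a) + 2*(κ*a)^2 - 4/3*(κ*a)^3 + 2/3*(κ*a)^4

/-- Degree-4 Taylor polynomial of `e^{2κa}`. -/
noncomputable def pF (κ a : ℝ) : ℝ :=
  1 + 2*(κ*a) + 2*(κ*a)^2 + 4/3*(κ*a)^3 + 2/3*(κ*a)^4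

/-- Degree-4 polynomial approximation of `u(a)`. -/
noncomputable def pU (β κ a : ℝ) : ℝ :=
  -(2*(κ*a)) * (1 + 2*a/β + (2*a/β)^2 + (2*a/β)^3)

/-- The polynomial approximation of `N(a)`. -/
noncomputable def Np (β κ a : ℝ) : ℝ :=
  (pE κ a + pF κ a) * (pE κ a - (1 + pU β κ a) * (1 + vFun β κ a)) +
    2 * pE κ a * vFun β κ a +
    (pE κ a - 1 - pU β κ a) * (pU β κ a - 1 - pE κ a)

/-- The explicit polynomial `Q` with `Np - 4κ⁴a⁴ = a⁵ Q`. -/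
noncomputable def Qp (β κ a : ℝ) : ℝ :=
  (-32 : ℝ)*κ^2*β⁻¹^3 +
  (64/3 : ℝ)*κ^4*β⁻¹^1 +
  (-128 : ℝ)*κ^2*β⁻¹^4*a^1 +
  (160/3 : ℝ)*κ^4*β⁻¹^2*a^1 +
  (8/9 : ℝ)*κ^6*a^1 +
  (-256 : ℝ)*κ^2*β⁻¹^5*a^2 +
  (320/3 : ℝ)*κ^4*β⁻¹^3*a^2 +
  (16/3 : ℝ)*κ^6*β⁻¹^1*a^2 +
  (-256 : ℝ)*κ^2*β⁻¹^6*a^3 +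
  (128 : ℝ)*κ^4*β⁻¹^4*a^3 +
  (32/3 : ℝ)*κ^6*β⁻¹^2*a^3 +
  (4/9 : ℝ)*κ^8*a^3 +
  (64/3 : ℝ)*κ^6*β⁻¹^3*a^4 +
  (128/3 : ℝ)*κ^6*β⁻¹^4*a^5

/-- Multiplier of the `E`-error. -/
noncomputable def Af (β κ a : ℝ) : ℝ :=
  Real.exp (2*(κ*a)) - (1 + uFun β κ a) * (1 + vFun β κ a) + 2 * vFun β κ a + 2 * uFun β κ a

/-- Multiplier of the `F`-error. -/
noncomputable def Bf (β κ a : ℝ) : ℝ :=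
  pE κ a - (1 + uFun β κ a) * (1 + vFun β κ a)

/-- Multiplier of the `u`-error. -/
noncomputable def Cf (β κ a : ℝ) : ℝ :=
  -(pE κ a + pF κ a) * (1 + vFun β κ a) + 2 * pE κ a - uFun β κ a - pU β κ a

lemma key_id (β κ a : ℝ) (hβ : β ≠ 0) :
    Np β κ a - 4 * κ ^ 4 * a ^ 4 = a ^ 5 * Qp β κ a := by
  unfold Np Qp pE pF pU vFun
  field_simp
  ring

lemma err_id (β κ a : ℝ) :
    NFun β κ a - Np β κ a =
      (Real.exp (-(2*(κ*a))) - pE κ a) * Af β κ a +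
      (Real.exp (2*(κ*a)) - pF κ a) * Bf β κ a +
      (uFun β κ a - pU β κ a) * Cf β κ a := by
  have h1 : (wFun κ a) ^ 2 = Real.exp (-(2*(κ*a))) := by
    unfold wFun; rw [sq, ← Real.exp_add]; ring_nf
  have h2 : (wFun κ a)⁻¹ ^ 2 = Real.exp (2*(κ*a)) := by
    unfold wFun; rw [← Real.exp_neg, sq, ← Real.exp_add]; ring_nf
  unfold NFun Af Bf Cf Np
  rw [h1, h2]
  ring

lemma rU_id (β κ a : ℝ) (hβ : β ≠ 0) (hden : 2*a - β ≠ 0) :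
    uFun β κ a - pU β κ a = -(2*(κ*a)) * (2*a/β)^4 / (1 - 2*a/β) := by
  have h1 : 1 - 2*a/β ≠ 0 := by
    intro h
    apply hden
    field_simp at h
    linarith
  have h2 : β - 2*a ≠ 0 := fun h => hden (by linarith)
  unfold uFun pU
  field_simp
  ring

lemma sum5_eq (y : ℝ) :
    ∑ i ∈ Finset.range 5, y ^ i / (Nat.factorial i) =
      1 + y + y^2/2 + y^3/6 + y^4/24 := by
  norm_num [Finset.sum_range_succ, Nat.factorial]

set_option maxHeartbeats 1000000 in
theorem stmt5 (β κ : ℝ) (hκ : 0 < κ) (hβ : β ≠ 0) :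
    ∃ C > (0 : ℝ), ∃ a₀ : ℝ, 0 < a₀ ∧ a₀ < |β| / 2 ∧
      ∀ a : ℝ, 0 < a → a < a₀ →
        |NFun β κ a - 4 * κ ^ 4 * a ^ 4| ≤ C * a ^ 5 := by
  have hβabs : 0 < |β| := abs_pos.mpr hβ
  set a₀ : ℝ := min (|β|/4) (1/(2*κ)) with ha₀def
  have ha₀pos : 0 < a₀ := lt_min (by positivity) (by positivity)
  have ha₀le : a₀ ≤ |β|/4 := min_le_left _ _
  have ha₀le' : a₀ ≤ 1/(2*κ) := min_le_right _ _
  have ha₀lt : a₀ < |β|/2 := lt_of_le_of_lt ha₀le (by linarith)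
  -- denominator is nonzero on [0, a₀]
  have hden : ∀ a ∈ Set.Icc (0:ℝ) a₀, 2*a - β ≠ 0 := by
    intro a ha h
    have h2a : 2*a = β := by linarith
    have hlt : |2*a| < |β| := by
      rw [abs_of_nonneg (by linarith [ha.1])]
      calc 2*a ≤ 2*a₀ := by linarith [ha.2]
        _ < |β| := by linarith
    rw [h2a] at hlt; exact lt_irrefl _ hlt
  -- continuity of the multiplier functions on the compact interval
  have hu : ContinuousOn (fun a => uFun β κ a) (Set.Icc 0 a₀) := by
    apply ContinuousOn.div (by fun_prop) (by fun_prop)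
    exact hden
  have hv : Continuous (fun a => vFun β κ a) :=
    (by fun_prop : Continuous fun a : ℝ => 2*κ*a^2).div_const β
  have hcont : ContinuousOn
      (fun a => |Af β κ a| + |Bf β κ a| + |Cf β κ a| + |Qp β κ a|)
      (Set.Icc 0 a₀) := by
    have hpE : Continuous fun a : ℝ => pE κ a := by unfold pE; fun_prop
    have hpF : Continuous fun a : ℝ => pF κ a := by unfold pF; fun_prop
    have hpU : Continuous fun a : ℝ => pU β κ a := by
      have heq : (fun a : ℝ => pU β κ a) =
          fun a => -(2*(κ*a)) * (1 + 2*a*β⁻¹ + (2*a*β⁻¹)^2 + (2*a*β⁻¹)^3) := by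
        funext a; unfold pU; rw [div_eq_mul_inv]
      rw [heq]; fun_prop
    have hA : ContinuousOn (fun a => Af β κ a) (Set.Icc 0 a₀) := by
      unfold Af
      exact (((by fun_prop : Continuous fun a : ℝ => Real.exp (2*(κ*a))).continuousOn.sub
        ((continuousOn_const.add hu).mul (continuous_const.add hv).continuousOn)).add
        (continuousOn_const.mul hv.continuousOn)).add (continuousOn_const.mul hu)
    have hB : ContinuousOn (fun a => Bf β κ a) (Set.Icc 0 a₀) := by
      unfold Bf
      exact hpE.continuousOn.sub
        ((continuousOn_const.add hu).mul (continuous_const.add hv).continuousOn)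
    have hC : ContinuousOn (fun a => Cf β κ a) (Set.Icc 0 a₀) := by
      unfold Cf
      exact ((((hpE.add hpF).neg.continuousOn.mul
            (continuous_const.add hv).continuousOn).add
        (continuous_const.mul hpE).continuousOn).sub hu).sub
        hpU.continuousOn
    have hQ : Continuous (fun a => Qp β κ a) := by unfold Qp; fun_prop
    exact ((hA.abs.add hB.abs).add hC.abs).add hQ.continuousOn.abs
  -- compactness bound
  obtain ⟨m, hm, hmax⟩ := isCompact_Icc.exists_isMaxOn
    (Set.nonempty_Icc.mpr (le_of_lt ha₀pos)) hcont
  set M : ℝ := |Af β κ m| + |Bf β κ m| + |Cf β κ m| + |Qp β κ m| with hM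
  have hM0 : 0 ≤ M := by positivity
  set c₀ : ℝ := 64*κ^5 + 64*κ/β^4 + 1 with hc₀
  have hc₀pos : 0 < c₀ := by positivity
  refine ⟨c₀ * (M + 1), by positivity, a₀, ha₀pos, ha₀lt, ?_⟩
  intro a ha0 haa₀
  have haIcc : a ∈ Set.Icc (0:ℝ) a₀ := ⟨le_of_lt ha0, le_of_lt haa₀⟩
  have hbnd : |Af β κ a| + |Bf β κ a| + |Cf β κ a| + |Qp β κ a| ≤ M := hmax haIcc
  -- basic size facts
  have hx1 : 2*(κ*a) ≤ 1 := by
    have h' : a ≤ 1/(2*κ) := le_trans (le_of_lt haa₀) ha₀le'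
    calc 2*(κ*a) ≤ 2*(κ*(1/(2*κ))) := by nlinarith
      _ = 1 := by field_simp
  have hx0 : 0 < 2*(κ*a) := by positivity
  have hka5 : (0:ℝ) ≤ κ^5*a^5 := by positivity
  -- error bound for exp(-2κa)
  have hrE : |Real.exp (-(2*(κ*a))) - pE κ a| ≤ 64*κ^5 * a^5 := by
    have h := Real.exp_bound (x := -(2*(κ*a)))
      (by rw [abs_neg, abs_of_pos hx0]; exact hx1) (n := 5) (by norm_num)
    have hsum : ∑ i ∈ Finset.range 5, (-(2*(κ*a))) ^ i / (Nat.factorial i) = pE κ a := by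
      rw [sum5_eq]; unfold pE; ring
    rw [hsum, abs_neg, abs_of_pos hx0] at h
    refine h.trans ?_
    have h32 : (2*(κ*a))^5 = 32*(κ^5*a^5) := by ring
    rw [h32]
    norm_num [Nat.factorial]
    nlinarith [hka5]
  -- error bound for exp(2κa)
  have hrF : |Real.exp (2*(κ*a)) - pF κ a| ≤ 64*κ^5 * a^5 := by
    have h := Real.exp_bound (x := 2*(κ*a))
      (by rw [abs_of_pos hx0]; exact hx1) (n := 5) (by norm_num)
    have hsum : ∑ i ∈ Finset.range 5, (2*(κ*a)) ^ i / (Nat.factorial i) = pF κ a := by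
      rw [sum5_eq]; unfold pF; ring
    rw [hsum, abs_of_pos hx0] at h
    refine h.trans ?_
    have h32 : (2*(κ*a))^5 = 32*(κ^5*a^5) := by ring
    rw [h32]
    norm_num [Nat.factorial]
    nlinarith [hka5]
  -- error bound for u
  have ht : |2*a/β| ≤ 1/2 := by
    rw [abs_div, abs_of_nonneg (by linarith : (0:ℝ) ≤ 2*a),
      div_le_div_iff₀ (by linarith) (by norm_num)]
    have h' : a ≤ |β|/4 := le_trans (le_of_lt haa₀) ha₀le
    linarith
  have hrU : |uFun β κ a - pU β κ a| ≤ (64*κ/β^4) * a^5 := by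
    rw [rU_id β κ a hβ (hden a haIcc)]
    have h1t : (1:ℝ)/2 ≤ |1 - 2*a/β| := by
      have h' := abs_sub_abs_le_abs_sub (1:ℝ) (2*a/β)
      rw [abs_one] at h'
      linarith
    rw [abs_div, abs_mul, abs_neg, abs_of_pos hx0, abs_pow,
      div_le_iff₀ (by linarith)]
    have hb : |2*a/β|^4 = 16*a^4/β^4 := by
      have h4 : |β|^4 = β^4 := by
        rw [pow_abs, abs_of_pos (by positivity : (0:ℝ) < β^4)]
      rw [abs_div, abs_of_nonneg (by linarith : (0:ℝ) ≤ 2*a), div_pow, h4]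
      ring
    rw [hb]
    calc 2*(κ*a) * (16*a^4/β^4) = (64*κ/β^4)*a^5*(1/2) := by ring
      _ ≤ (64*κ/β^4)*a^5*|1 - 2*a/β| :=
          mul_le_mul_of_nonneg_left h1t (by positivity)
  -- assemble
  have hQb : |Np β κ a - 4 * κ ^ 4 * a ^ 4| ≤ a^5 * |Qp β κ a| := by
    rw [key_id β κ a hβ, abs_mul, abs_pow, abs_of_pos ha0]
  have hErr : |NFun β κ a - Np β κ a| ≤
      64*κ^5*a^5 * |Af β κ a| + 64*κ^5*a^5 * |Bf β κ a| +
        (64*κ/β^4)*a^5 * |Cf β κ a| := by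
    rw [err_id β κ a]
    have t1 := abs_add_le
      ((Real.exp (-(2*(κ*a))) - pE κ a) * Af β κ a +
        (Real.exp (2*(κ*a)) - pF κ a) * Bf β κ a)
      ((uFun β κ a - pU β κ a) * Cf β κ a)
    have t2 := abs_add_le ((Real.exp (-(2*(κ*a))) - pE κ a) * Af β κ a)
      ((Real.exp (2*(κ*a)) - pF κ a) * Bf β κ a)
    rw [abs_mul] at t1
    rw [abs_mul, abs_mul] at t2
    have e1 : |Real.exp (-(2*(κ*a))) - pE κ a| * |Af β κ a| ≤
        64*κ^5*a^5 * |Af β κ a| :=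
      mul_le_mul_of_nonneg_right hrE (abs_nonneg _)
    have e2 : |Real.exp (2*(κ*a)) - pF κ a| * |Bf β κ a| ≤
        64*κ^5*a^5 * |Bf β κ a| :=
      mul_le_mul_of_nonneg_right hrF (abs_nonneg _)
    have e3 : |uFun β κ a - pU β κ a| * |Cf β κ a| ≤
        (64*κ/β^4)*a^5 * |Cf β κ a| :=
      mul_le_mul_of_nonneg_right hrU (abs_nonneg _)
    linarith
  have hcoef1 : 64*κ^5 ≤ c₀ := by
    have : (0:ℝ) < 64*κ/β^4 := by positivity
    rw [hc₀]; linarith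
  have hcoef2 : 64*κ/β^4 ≤ c₀ := by
    have : (0:ℝ) < 64*κ^5 := by positivity
    rw [hc₀]; linarith
  have hcoef3 : (1:ℝ) ≤ c₀ := by
    have h1 : (0:ℝ) < 64*κ^5 := by positivity
    have h2 : (0:ℝ) < 64*κ/β^4 := by positivity
    rw [hc₀]; linarith
  have ha5 : (0:ℝ) < a^5 := by positivity
  calc |NFun β κ a - 4 * κ ^ 4 * a ^ 4|
      ≤ |NFun β κ a - Np β κ a| + |Np β κ a - 4 * κ ^ 4 * a ^ 4| :=
        abs_sub_le _ (Np β κ a) _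
    _ ≤ (64*κ^5*a^5 * |Af β κ a| + 64*κ^5*a^5 * |Bf β κ a| +
          (64*κ/β^4)*a^5 * |Cf β κ a|) + a^5 * |Qp β κ a| :=
        add_le_add hErr hQb
    _ ≤ c₀*a^5 * |Af β κ a| + c₀*a^5 * |Bf β κ a| +
          c₀*a^5 * |Cf β κ a| + c₀*a^5 * |Qp β κ a| := by
        have s1 := mul_le_mul_of_nonneg_right
          (mul_le_mul_of_nonneg_right hcoef1 ha5.le) (abs_nonneg (Af β κ a))
        have s2 := mul_le_mul_of_nonneg_right
          (mul_le_mul_of_nonneg_right hcoef1 ha5.le) (abs_nonneg (Bf β κ a))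
        have s3 := mul_le_mul_of_nonneg_right
          (mul_le_mul_of_nonneg_right hcoef2 ha5.le) (abs_nonneg (Cf β κ a))
        have s4 := mul_le_mul_of_nonneg_right
          (mul_le_mul_of_nonneg_right hcoef3 ha5.le) (abs_nonneg (Qp β κ a))
        refine add_le_add (add_le_add (add_le_add s1 s2) s3) ?_
        calc a^5 * |Qp β κ a| = 1 * a^5 * |Qp β κ a| := by ring
          _ ≤ c₀ * a^5 * |Qp β κ a| := s4
    _ = c₀*a^5 * (|Af β κ a| + |Bf β κ a| + |Cf β κ a| + |Qp β κ a|) := by ring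
    _ ≤ c₀*a^5 * M := mul_le_mul_of_nonneg_left hbnd (by positivity)
    _ ≤ c₀ * (M + 1) * a^5 := by nlinarith [mul_pos hc₀pos ha5]
end

section
/- Fix κ > 0 and β ∈ ℝ \ {0}. Define, for a > 0 with 2a ≠ β, u(a) := 2βκa/(2a − β), v(a) := 2κa²/β, w(a) := e^{−κa}, and N₂(a) := (w(a)⁴ + 1)·v(a) + 2·[w(a)² − (1 + u(a))(1 + v(a))] + (w(a)² − 1 − u(a))·(u(a) − 1 − w(a)²). Then there exist C > 0 and a₀ ∈ (0, |β|/2) such that |N₂(a) + 4κ⁴·a⁴| ≤ C·a⁵ for all a ∈ (0, a₀); i.e., N₂(a) = −4κ⁴a⁴ + O(a⁵) as a → 0⁺. -/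
/-- The numerator `N₂(a)` from the triple-δ resolvent computation (opposite-side case). -/
noncomputable def N2Fun (β κ a : ℝ) : ℝ :=
  ((wFun κ a) ^ 4 + 1) * vFun β κ a +
    2 * ((wFun κ a) ^ 2 - (1 + uFun β κ a) * (1 + vFun β κ a)) +
    ((wFun κ a) ^ 2 - 1 - uFun β κ a) * (uFun β κ a - 1 - (wFun κ a) ^ 2)

noncomputable def qPoly (β κ a : ℝ) : ℝ :=
  (-32) * κ^2 + (-32) * β * κ^3 + (-32/3) * β^2 * κ^4 + (16/3) * β^3 * κ^5
  + 64 * a * κ^3 + 64 * a * β * κ^4 + (-16/3) * a * β^2 * κ^5 + (-40/9) * a * β^3 * κ^6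
  + (-256/3) * a^2 * κ^4 + (-160/3) * a^2 * β * κ^5 + (160/9) * a^2 * β^2 * κ^6
  + (16/9) * a^2 * β^3 * κ^7 + (256/3) * a^3 * κ^5 + (-160/9) * a^3 * β * κ^6
  + (-64/9) * a^3 * β^2 * κ^7 + (-4/9) * a^3 * β^3 * κ^8 + (64/9) * a^4 * β * κ^7
  + (16/9) * a^4 * β^2 * κ^8 + (-16/9) * a^5 * β * κ^8

noncomputable def P1 (κ a : ℝ) : ℝ := 1 - 2*κ*a + 2*κ^2*a^2 - (4/3)*κ^3*a^3 + (2/3)*κ^4*a^4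
noncomputable def P2 (κ a : ℝ) : ℝ := 1 - 4*κ*a + 8*κ^2*a^2 - (32/3)*κ^3*a^3 + (32/3)*κ^4*a^4

lemma key (β κ a E1 E2 : ℝ) (hβ : β ≠ 0) (hd : 2*a - β ≠ 0) :
    (((E2 + 1) * (2*κ*a^2/β)
        + 2*(E1 - (1 + 2*β*κ*a/(2*a-β))*(1 + 2*κ*a^2/β))
        + (E1 - 1 - 2*β*κ*a/(2*a-β))*(2*β*κ*a/(2*a-β) - 1 - E1))
      + 4*κ^4*a^4) * ((2*a-β)^2*β)
    = a^5 * qPoly β κ a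
      + (E1 - P1 κ a) * (-β*(2*a-β)^2*(E1 + P1 κ a - 2) + 4*β^2*κ*a*(2*a-β))
      + (E2 - P2 κ a) * (2*κ*a^2*(2*a-β)^2) := by
  unfold qPoly P1 P2
  field_simp
  ring


theorem stmt6 (β κ : ℝ) (hκ : 0 < κ) (hβ : β ≠ 0) :
    ∃ C > (0 : ℝ), ∃ a₀ : ℝ, 0 < a₀ ∧ a₀ < |β| / 2 ∧
      ∀ a : ℝ, 0 < a → a < a₀ →
        |N2Fun β κ a + 4 * κ ^ 4 * a ^ 4| ≤ C * a ^ 5 := by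
  have hb : (0:ℝ) < |β| := abs_pos.mpr hβ
  obtain ⟨M1, hM1⟩ := (isCompact_Icc : IsCompact (Set.Icc (0:ℝ) 1)).exists_bound_of_continuousOn
    (f := fun x => qPoly β κ x) (by unfold qPoly; fun_prop)
  obtain ⟨M2, hM2⟩ := (isCompact_Icc : IsCompact (Set.Icc (0:ℝ) 1)).exists_bound_of_continuousOn
    (f := fun x => -β*(2*x-β)^2*(Real.exp (-(2*κ*x)) + P1 κ x - 2) + 4*β^2*κ*x*(2*x-β))
    (by unfold P1; fun_prop)
  obtain ⟨M3, hM3⟩ := (isCompact_Icc : IsCompact (Set.Icc (0:ℝ) 1)).exists_bound_of_continuousOn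
    (f := fun x => 2*κ*x^2*(2*x-β)^2) (by fun_prop)
  set S : ℝ := max M1 1 + 32*κ^5*(max M2 1) + 1024*κ^5*(max M3 1) with hS
  have hSpos : 0 < S := by positivity
  set c0 : ℝ := β^2*|β|/4 with hc0
  have hb2 : (0:ℝ) < β^2 := by positivity
  have hc0pos : 0 < c0 := by rw [hc0]; positivity
  refine ⟨S/c0, div_pos hSpos hc0pos, min (|β|/4) (min (1/(4*κ)) 1), ?_, ?_, ?_⟩
  · positivity
  · calc min (|β|/4) (min (1/(4*κ)) 1) ≤ |β|/4 := min_le_left _ _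
      _ < |β|/2 := by linarith
  · intro a ha haa
    have ha1 : a ≤ 1 := le_of_lt (lt_of_lt_of_le haa (le_trans (min_le_right _ _) (min_le_right _ _)))
    have ha4 : a < |β|/4 := lt_of_lt_of_le haa (min_le_left _ _)
    have hak : a < 1/(4*κ) := lt_of_lt_of_le haa (le_trans (min_le_right _ _) (min_le_left _ _))
    have hak' : 4*κ*a < 1 := by
      have := (lt_div_iff₀ (by positivity : (0:ℝ) < 4*κ)).mp hak
      linarith
    have habs : |β|/2 ≤ |2*a - β| := by
      rcases lt_or_gt_of_ne hβ with h|h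
      · have h1 : |β| = -β := abs_of_neg h
        have h2 : |2*a-β| = 2*a-β := abs_of_pos (by linarith)
        rw [h1, h2]; linarith
      · have h1 : |β| = β := abs_of_pos h
        have h2 : |2*a-β| = -(2*a-β) := abs_of_neg (by rw [h1] at ha4; linarith)
        rw [h1] at ha4 ⊢; rw [h2]; linarith
    have hd : 2*a - β ≠ 0 := by
      intro hc; rw [hc, abs_zero] at habs; linarith
    have hsq : β^2/4 ≤ (2*a-β)^2 := by
      nlinarith [sq_abs (2*a-β), sq_abs β, abs_nonneg (2*a-β)]
    -- exp remainder bounds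
    have hD1 : |Real.exp (-(2*κ*a)) - P1 κ a| ≤ 32*κ^5*a^5 := by
      have hx1 : |(-(2*κ*a))| ≤ 1 := by
        rw [abs_neg, abs_of_nonneg (by positivity)]; linarith
      have h := Real.exp_bound hx1 (n := 5) (by norm_num)
      have hsum : ∑ m ∈ Finset.range 5, (-(2*κ*a)) ^ m / (Nat.factorial m) = P1 κ a := by
        simp [Finset.sum_range_succ, Nat.factorial, P1]; ring
      rw [hsum] at h
      have habs1 : |(-(2*κ*a))| = 2*κ*a := by
        rw [abs_neg, abs_of_nonneg (by positivity)]
      rw [habs1] at h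
      norm_num [Nat.factorial] at h
      have hpos : (0:ℝ) ≤ κ^5*a^5 := by positivity
      nlinarith [h]
    have hD2 : |Real.exp (-(4*κ*a)) - P2 κ a| ≤ 1024*κ^5*a^5 := by
      have hx1 : |(-(4*κ*a))| ≤ 1 := by
        rw [abs_neg, abs_of_nonneg (by positivity)]; linarith
      have h := Real.exp_bound hx1 (n := 5) (by norm_num)
      have hsum : ∑ m ∈ Finset.range 5, (-(4*κ*a)) ^ m / (Nat.factorial m) = P2 κ a := by
        simp [Finset.sum_range_succ, Nat.factorial, P2]; ring
      rw [hsum] at h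
      have habs1 : |(-(4*κ*a))| = 4*κ*a := by
        rw [abs_neg, abs_of_nonneg (by positivity)]
      rw [habs1] at h
      norm_num [Nat.factorial] at h
      have hpos : (0:ℝ) ≤ κ^5*a^5 := by positivity
      nlinarith [h]
    -- rewrite N2Fun
    have hE1 : wFun κ a ^ 2 = Real.exp (-(2*κ*a)) := by
      unfold wFun; rw [← Real.exp_nat_mul]; norm_num; ring_nf
    have hE2 : wFun κ a ^ 4 = Real.exp (-(4*κ*a)) := by
      unfold wFun; rw [← Real.exp_nat_mul]; norm_num; ring_nf
    have hmain : (N2Fun β κ a + 4*κ^4*a^4) * ((2*a-β)^2*β)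
        = a^5 * qPoly β κ a
          + (Real.exp (-(2*κ*a)) - P1 κ a) *
              (-β*(2*a-β)^2*(Real.exp (-(2*κ*a)) + P1 κ a - 2) + 4*β^2*κ*a*(2*a-β))
          + (Real.exp (-(4*κ*a)) - P2 κ a) * (2*κ*a^2*(2*a-β)^2) := by
      unfold N2Fun uFun vFun
      rw [hE1, hE2]
      exact key β κ a _ _ hβ hd
    have hmem : a ∈ Set.Icc (0:ℝ) 1 := ⟨ha.le, ha1⟩
    have hq := hM1 a hmem
    have hg1 := hM2 a hmem
    have hg2 := hM3 a hmem
    rw [Real.norm_eq_abs] at hq hg1 hg2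
    -- bound RHS
    set X := a^5 * qPoly β κ a with hX
    set Y := (Real.exp (-(2*κ*a)) - P1 κ a) *
              (-β*(2*a-β)^2*(Real.exp (-(2*κ*a)) + P1 κ a - 2) + 4*β^2*κ*a*(2*a-β)) with hY
    set Z := (Real.exp (-(4*κ*a)) - P2 κ a) * (2*κ*a^2*(2*a-β)^2) with hZ
    have hRHS : |a^5 * qPoly β κ a
          + (Real.exp (-(2*κ*a)) - P1 κ a) *
              (-β*(2*a-β)^2*(Real.exp (-(2*κ*a)) + P1 κ a - 2) + 4*β^2*κ*a*(2*a-β))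
          + (Real.exp (-(4*κ*a)) - P2 κ a) * (2*κ*a^2*(2*a-β)^2)| ≤ a^5 * S := by
      have t1 : |a^5 * qPoly β κ a| ≤ a^5 * max M1 1 := by
        rw [abs_mul, abs_of_nonneg (by positivity : (0:ℝ) ≤ a^5)]
        exact mul_le_mul_of_nonneg_left (le_trans hq (le_max_left _ _)) (by positivity)
      have t2 : |(Real.exp (-(2*κ*a)) - P1 κ a) *
              (-β*(2*a-β)^2*(Real.exp (-(2*κ*a)) + P1 κ a - 2) + 4*β^2*κ*a*(2*a-β))|
            ≤ 32*κ^5*a^5 * max M2 1 := by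
        rw [abs_mul]
        exact mul_le_mul hD1 (le_trans hg1 (le_max_left _ _)) (abs_nonneg _) (by positivity)
      have t3 : |(Real.exp (-(4*κ*a)) - P2 κ a) * (2*κ*a^2*(2*a-β)^2)|
            ≤ 1024*κ^5*a^5 * max M3 1 := by
        rw [abs_mul]
        exact mul_le_mul hD2 (le_trans hg2 (le_max_left _ _)) (abs_nonneg _) (by positivity)
      calc |X + Y + Z| ≤ |X + Y| + |Z| := abs_add_le _ _
        _ ≤ (|X| + |Y|) + |Z| := by gcongr; exact abs_add_le _ _
        _ ≤ a^5 * max M1 1 + 32*κ^5*a^5 * max M2 1 + 1024*κ^5*a^5 * max M3 1 :=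
            add_le_add (add_le_add t1 t2) t3
        _ = a^5 * S := by rw [hS]; ring
    -- combine
    have habsL : |(N2Fun β κ a + 4*κ^4*a^4) * ((2*a-β)^2*β)|
        = |N2Fun β κ a + 4*κ^4*a^4| * ((2*a-β)^2 * |β|) := by
      rw [abs_mul, abs_mul, abs_of_nonneg (sq_nonneg (2*a-β))]
    have hLc : |N2Fun β κ a + 4*κ^4*a^4| * ((2*a-β)^2 * |β|) ≤ a^5 * S := by
      rw [← habsL, hmain]; exact hRHS
    have hc0le : c0 ≤ (2*a-β)^2 * |β| := by
      rw [hc0]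
      calc β^2*|β|/4 = (β^2/4) * |β| := by ring
        _ ≤ (2*a-β)^2 * |β| := mul_le_mul_of_nonneg_right hsq (abs_nonneg β)
    have hstep : |N2Fun β κ a + 4*κ^4*a^4| * c0 ≤ a^5 * S :=
      le_trans (mul_le_mul_of_nonneg_left hc0le (abs_nonneg _)) hLc
    rw [show S/c0 * a^5 = (S*a^5)/c0 by ring, le_div_iff₀ hc0pos]
    linarith [hstep]
end

section
/- Fix κ > 0 and β ∈ ℝ \ {0} with 2 + βκ ≠ 0. With u(a) := 2βκa/(2a − β), v(a) := 2κa²/β, w(a) := e^{−κa}, D(a) := (w² − 1 − u)·[(1 + u)(1 + v) − w²(1 − v)]/(2κ) and N(a) := (w² + w^{−2})·[w² − (1 + u)(1 + v)] + 2w²v + (w² − 1 − u)·(u − 1 − w²), one has lim_{a → 0⁺} N(a)/D(a) = −2βκ²/(2 + βκ). -/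
open Filter Topology

/-- The denominator `D(a)`. -/
noncomputable def DFun (β κ a : ℝ) : ℝ :=
  ((wFun κ a) ^ 2 - 1 - uFun β κ a) *
    ((1 + uFun β κ a) * (1 + vFun β κ a) - (wFun κ a) ^ 2 * (1 - vFun β κ a)) / (2 * κ)

lemma exp_quad (c : ℝ) :
    Tendsto (fun a : ℝ => (Real.exp (c * a) - 1 - c * a) / a ^ 2) (𝓝[>] (0:ℝ))
      (𝓝 (c ^ 2 / 2)) := by
  rw [tendsto_iff_dist_tendsto_zero]
  have hbound : Tendsto (fun a : ℝ => 2 / 9 * |c| ^ 3 * a) (𝓝[>] (0:ℝ)) (𝓝 0) := by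
    have h : Tendsto (fun a : ℝ => 2 / 9 * |c| ^ 3 * a) (𝓝 (0:ℝ)) (𝓝 (2 / 9 * |c| ^ 3 * 0)) :=
      (continuous_const.mul continuous_id).tendsto 0
    simpa using h.mono_left nhdsWithin_le_nhds
  refine squeeze_zero' (Eventually.of_forall fun _ => dist_nonneg) ?_ hbound
  have h1 : ∀ᶠ a in 𝓝[>] (0:ℝ), |c * a| ≤ 1 := by
    have h : Tendsto (fun a : ℝ => |c * a|) (𝓝[>] (0:ℝ)) (𝓝 0) := by
      have h' : Tendsto (fun a : ℝ => |c * a|) (𝓝 (0:ℝ)) (𝓝 |c * 0|) :=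
        ((continuous_const.mul continuous_id).abs).tendsto 0
      simpa using h'.mono_left nhdsWithin_le_nhds
    exact h.eventually_le_const (by norm_num)
  filter_upwards [h1, self_mem_nhdsWithin] with a hca ha
  have ha' : (0:ℝ) < a := ha
  have hb := Real.exp_bound hca (n := 3) (by norm_num)
  have hsum : ∑ m ∈ Finset.range 3, (c * a) ^ m / (m.factorial) = 1 + c * a + (c * a) ^ 2 / 2 := by
    simp [Finset.sum_range_succ]
  rw [hsum] at hb
  have h2 : (Real.exp (c * a) - 1 - c * a) / a ^ 2 - c ^ 2 / 2
      = (Real.exp (c * a) - (1 + c * a + (c * a) ^ 2 / 2)) / a ^ 2 := by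
    field_simp
    ring
  rw [Real.dist_eq, h2, abs_div, abs_of_pos (by positivity : (0:ℝ) < a ^ 2)]
  rw [div_le_iff₀ (by positivity : (0:ℝ) < a ^ 2)]
  calc |Real.exp (c * a) - (1 + c * a + (c * a) ^ 2 / 2)|
      ≤ |c * a| ^ 3 * (4 / (3 * 3 * 2)) := by
        convert hb using 2; norm_num [Nat.factorial]
    _ ≤ 2 / 9 * |c| ^ 3 * a * a ^ 2 := by
        rw [abs_mul, abs_of_pos ha']
        ring_nf
        nlinarith [abs_nonneg c, ha'.le]

lemma exp_lin (c : ℝ) :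
    Tendsto (fun a : ℝ => (Real.exp (c * a) - 1) / a) (𝓝[>] (0:ℝ)) (𝓝 c) := by
  have h := ((tendsto_id.mono_left nhdsWithin_le_nhds).mul (exp_quad c)).add tendsto_const_nhds
    (b := c)
  rw [zero_mul, zero_add] at h
  refine h.congr' ?_
  filter_upwards [self_mem_nhdsWithin] with a ha
  have ha' : (a:ℝ) ≠ 0 := ne_of_gt ha
  field_simp
  simp only [id_eq]
  ring

noncomputable def Pf (β κ a : ℝ) : ℝ := ((wFun κ a) ^ 2 - 1 - uFun β κ a) / a ^ 2

noncomputable def Tf (κ a : ℝ) : ℝ :=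
  ((wFun κ a) ^ 2 - ((wFun κ a)⁻¹) ^ 2 + 2 * κ * a * ((wFun κ a) ^ 2 + ((wFun κ a)⁻¹) ^ 2)) / a ^ 2

noncomputable def Sf (β κ a : ℝ) : ℝ :=
  Tf κ a + 4 * κ * ((wFun κ a) ^ 2 + ((wFun κ a)⁻¹) ^ 2) / (β - 2 * a)

noncomputable def Rf (κ a : ℝ) : ℝ := ((wFun κ a - (wFun κ a)⁻¹) / a) ^ 2

set_option maxHeartbeats 2000000 in
theorem stmt7 (β κ : ℝ) (hκ : 0 < κ) (hβ : β ≠ 0) (h2 : 2 + β * κ ≠ 0) :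
    Tendsto (fun a : ℝ => NFun β κ a / DFun β κ a) (nhdsWithin 0 (Set.Ioi 0))
      (nhds (-2 * β * κ ^ 2 / (2 + β * κ))) := by
  have hκ' : κ ≠ 0 := ne_of_gt hκ
  have hw2exp : ∀ a : ℝ, (wFun κ a) ^ 2 = Real.exp (-(2 * κ) * a) := by
    intro a
    rw [wFun, pow_two, ← Real.exp_add]
    ring_nf
  have hwinv2 : ∀ a : ℝ, ((wFun κ a)⁻¹) ^ 2 = Real.exp (2 * κ * a) := by
    intro a
    rw [wFun, ← Real.exp_neg, pow_two, ← Real.exp_add]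
    ring_nf
  have hwne : ∀ a : ℝ, wFun κ a ≠ 0 := fun a => Real.exp_ne_zero _
  -- the punctured interval where everything is regular
  have hIoo : Set.Ioo (0:ℝ) (|β| / 2) ∈ 𝓝[>] (0:ℝ) :=
    Ioo_mem_nhdsGT_of_mem ⟨le_refl 0, by positivity⟩
  have hab : ∀ a ∈ Set.Ioo (0:ℝ) (|β| / 2), 2 * a - β ≠ 0 := by
    intro a ha
    rcases lt_or_gt_of_ne hβ with h | h
    · have : 0 < 2 * a - β := by linarith [ha.1]
      exact ne_of_gt this
    · have hb : |β| = β := abs_of_pos h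
      have : 2 * a - β < 0 := by
        have := ha.2
        rw [hb] at this
        linarith
      exact ne_of_lt this
  -- limit of P
  have hP : Tendsto (fun a => Pf β κ a) (𝓝[>] (0:ℝ)) (𝓝 (2 * κ ^ 2 + 4 * κ / β)) := by
    have hc : Tendsto (fun a : ℝ => -(4 * κ) / (2 * a - β)) (𝓝[>] (0:ℝ))
        (𝓝 (-(4 * κ) / (2 * 0 - β))) := by
      have : ContinuousAt (fun a : ℝ => -(4 * κ) / (2 * a - β)) 0 := by
        apply ContinuousAt.div
        · fun_prop
        · fun_prop
        · simpa using hβ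
      exact this.tendsto.mono_left nhdsWithin_le_nhds
    have h := (exp_quad (-(2 * κ))).add hc
    have hval : (-(2 * κ)) ^ 2 / 2 + -(4 * κ) / (2 * 0 - β) = 2 * κ ^ 2 + 4 * κ / β := by
      field_simp
      have h4b : β * (4 / β) = 4 := by field_simp
      rw [mul_zero, zero_sub, div_neg, neg_neg, mul_add, h4b]
      ring
    rw [hval] at h
    refine h.congr' ?_
    filter_upwards [hIoo] with a ha
    have ha0 : a ≠ 0 := ne_of_gt ha.1
    have hab' := hab a ha
    simp only [Pf, uFun, hw2exp]
    field_simp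
    ring
  -- limit of T
  have hT : Tendsto (fun a => Tf κ a) (𝓝[>] (0:ℝ)) (𝓝 0) := by
    have h := ((exp_quad (-(2 * κ))).sub (exp_quad (2 * κ))).add
      (((exp_lin (-(2 * κ))).const_mul (2 * κ)).add ((exp_lin (2 * κ)).const_mul (2 * κ)))
    have hval : ((-(2 * κ)) ^ 2 / 2 - (2 * κ) ^ 2 / 2) + (2 * κ * -(2 * κ) + 2 * κ * (2 * κ))
        = 0 := by ring
    rw [hval] at h
    refine h.congr' ?_
    filter_upwards [self_mem_nhdsWithin] with a ha
    have ha0 : a ≠ 0 := ne_of_gt ha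
    simp only [Tf, hw2exp, hwinv2]
    field_simp
    ring
  -- limit of S
  have hS : Tendsto (fun a => Sf β κ a) (𝓝[>] (0:ℝ)) (𝓝 (8 * κ / β)) := by
    have hc : Tendsto (fun a : ℝ =>
        4 * κ * (Real.exp (-(2 * κ) * a) + Real.exp (2 * κ * a)) / (β - 2 * a)) (𝓝[>] (0:ℝ))
        (𝓝 (4 * κ * (Real.exp (-(2 * κ) * 0) + Real.exp (2 * κ * 0)) / (β - 2 * 0))) := by
      have : ContinuousAt (fun a : ℝ =>
          4 * κ * (Real.exp (-(2 * κ) * a) + Real.exp (2 * κ * a)) / (β - 2 * a)) 0 := by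
        apply ContinuousAt.div
        · fun_prop
        · fun_prop
        · simpa using hβ
      exact this.tendsto.mono_left nhdsWithin_le_nhds
    have h := hT.add hc
    have hval : (0:ℝ) + 4 * κ * (Real.exp (-(2 * κ) * 0) + Real.exp (2 * κ * 0)) / (β - 2 * 0)
        = 8 * κ / β := by
      simp
      ring
    rw [hval] at h
    refine h.congr (fun a => ?_)
    simp only [Sf, hw2exp, hwinv2]
  -- limit of R
  have hR : Tendsto (fun a => Rf κ a) (𝓝[>] (0:ℝ)) (𝓝 (4 * κ ^ 2)) := by
    have hinner : Tendsto (fun a : ℝ => (wFun κ a - (wFun κ a)⁻¹) / a) (𝓝[>] (0:ℝ))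
        (𝓝 (-κ - κ)) := by
      have h := (exp_lin (-κ)).sub (exp_lin κ)
      refine h.congr (fun a => ?_)
      have h1 : wFun κ a = Real.exp (-κ * a) := rfl
      have h2 : (wFun κ a)⁻¹ = Real.exp (κ * a) := by
        rw [wFun, ← Real.exp_neg]
        ring_nf
      rw [h2, h1]
      ring
    have h := hinner.pow 2
    have hval : (-κ - κ) ^ 2 = 4 * κ ^ 2 := by ring
    rw [hval] at h
    exact h
  -- limit of u
  have hu : Tendsto (fun a => uFun β κ a) (𝓝[>] (0:ℝ)) (𝓝 0) := by
    have : ContinuousAt (fun a : ℝ => 2 * β * κ * a / (2 * a - β)) 0 := by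
      apply ContinuousAt.div
      · fun_prop
      · fun_prop
      · simpa using hβ
    have h : Tendsto (fun a : ℝ => 2 * β * κ * a / (2 * a - β)) (𝓝[>] (0:ℝ))
        (𝓝 (2 * β * κ * 0 / (2 * 0 - β))) := this.tendsto.mono_left nhdsWithin_le_nhds
    simpa [uFun] using h
  -- limit of w²
  have hw2 : Tendsto (fun a => (wFun κ a) ^ 2) (𝓝[>] (0:ℝ)) (𝓝 1) := by
    have : ContinuousAt (fun a : ℝ => Real.exp (-(2 * κ) * a)) 0 := by fun_prop
    have h : Tendsto (fun a : ℝ => Real.exp (-(2 * κ) * a)) (𝓝[>] (0:ℝ))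
        (𝓝 (Real.exp (-(2 * κ) * 0))) := this.tendsto.mono_left nhdsWithin_le_nhds
    simp only [mul_zero, Real.exp_zero] at h
    exact h.congr (fun a => (hw2exp a).symm)
  -- assemble the denominator limit
  have hden : Tendsto (fun a => Pf β κ a *
      (2 * κ / β * (1 + uFun β κ a + (wFun κ a) ^ 2) - Pf β κ a)) (𝓝[>] (0:ℝ))
      (𝓝 ((2 * κ ^ 2 + 4 * κ / β) *
        (2 * κ / β * (1 + 0 + 1) - (2 * κ ^ 2 + 4 * κ / β)))) := by
    exact hP.mul ((((tendsto_const_nhds.add hu).add hw2).const_mul (2 * κ / β)).sub hP)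
  have h2' : κ * β + 2 ≠ 0 := by
    intro h
    apply h2
    linarith [h]
  have hdenval : (2 * κ ^ 2 + 4 * κ / β) * (2 * κ / β * (1 + 0 + 1) - (2 * κ ^ 2 + 4 * κ / β))
      = -4 * κ ^ 3 * (κ * β + 2) / β := by
    field_simp
    ring
  have hdenne : (2 * κ ^ 2 + 4 * κ / β) * (2 * κ / β * (1 + 0 + 1) - (2 * κ ^ 2 + 4 * κ / β))
      ≠ 0 := by
    rw [hdenval]
    apply div_ne_zero _ hβ
    apply mul_ne_zero _ h2'
    intro h
    have := pow_pos hκ 3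
    linarith
  -- assemble the numerator limit
  have hnum : Tendsto (fun a => 2 * κ * (Rf κ a * Pf β κ a + 2 * κ / β * Sf β κ a
      - (Pf β κ a) ^ 2)) (𝓝[>] (0:ℝ))
      (𝓝 (2 * κ * (4 * κ ^ 2 * (2 * κ ^ 2 + 4 * κ / β) + 2 * κ / β * (8 * κ / β)
        - (2 * κ ^ 2 + 4 * κ / β) ^ 2))) := by
    exact (((hR.mul hP).add (hS.const_mul (2 * κ / β))).sub (hP.pow 2)).const_mul (2 * κ)
  have hmain := hnum.div hden hdenne
  have hE : 2 * κ * (4 * κ ^ 2 * (2 * κ ^ 2 + 4 * κ / β) + 2 * κ / β * (8 * κ / β)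
      - (2 * κ ^ 2 + 4 * κ / β) ^ 2) /
      ((2 * κ ^ 2 + 4 * κ / β) * (2 * κ / β * (1 + 0 + 1) - (2 * κ ^ 2 + 4 * κ / β)))
      = -2 * β * κ ^ 2 / (2 + β * κ) := by
    rw [hdenval]
    field_simp
    have h2'' : 2 + κ * β ≠ 0 := by rw [add_comm]; exact h2'
    field_simp
    ring
  rw [hE] at hmain
  refine hmain.congr' ?_
  filter_upwards [hIoo] with a ha
  have ha0 : a ≠ 0 := ne_of_gt ha.1
  have hab' := hab a ha
  have hba : β - 2 * a ≠ 0 := fun h => hab' (by linarith)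
  have hw := hwne a
  have h4 : a ^ 4 ≠ 0 := pow_ne_zero _ ha0
  have hN : NFun β κ a
      = (Rf κ a * Pf β κ a + 2 * κ / β * Sf β κ a - (Pf β κ a) ^ 2) * a ^ 4 := by
    simp only [NFun, uFun, vFun, Rf, Pf, Sf, Tf]
    field_simp
    ring
  have hD : DFun β κ a = (Pf β κ a *
      (2 * κ / β * (1 + uFun β κ a + (wFun κ a) ^ 2) - Pf β κ a) / (2 * κ)) * a ^ 4 := by
    simp only [DFun, uFun, vFun, Pf]
    field_simp
    ring
  simp only [Pi.div_apply]
  rw [hN, hD, mul_div_mul_right _ _ h4, div_div_eq_mul_div]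
  ring
end

section
/- Let V₀ : ℝ → ℝ be measurable and square-integrable with ∫_ℝ V₀(x) dx = 1 and I₀ := ∫_ℝ |x|^{1/2}|V₀(x)| dx < ∞. Let β ∈ ℝ, a > 0, ε > 0, and let u, v : ℝ → ℂ be differentiable on ℝ with u, u', v, v' square-integrable. Define t⁰_{a,ε}[u,v] := (β/a²)·( u(0)·conj(v(0)) − (1/ε)∫_ℝ V₀(x/ε)·u(x)·conj(v(x)) dx ). Then |t⁰_{a,ε}[u,v]| ≤ √2·√ε·(|β|/a²)·I₀·‖u‖_{W^{1,2}}·‖v‖_{W^{1,2}}. -/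
open MeasureTheory intervalIntegral Filter

lemma aux_iint (u : ℝ → ℂ) (hu2' : Integrable (fun x => ‖deriv u x‖ ^ 2))
    (a b : ℝ) : IntervalIntegrable (deriv u) volume a b := by
  rw [intervalIntegrable_iff]
  have hconst : IntegrableOn (fun _ : ℝ => (1:ℝ)) (Set.uIoc a b) volume :=
    integrableOn_const measure_Ioc_lt_top.ne
  have hbd : IntegrableOn (fun x => (‖deriv u x‖ ^ 2 + 1) / 2) (Set.uIoc a b) volume :=
    ((hu2'.integrableOn).add hconst).div_const 2
  refine hbd.mono' ((measurable_deriv u).aestronglyMeasurable.restrict) ?_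
  filter_upwards with x
  have h : (0:ℝ) ≤ (‖deriv u x‖ - 1)^2 := sq_nonneg _
  have := norm_nonneg (deriv u x)
  nlinarith

lemma aux_ftc (u : ℝ → ℂ) (hu : Differentiable ℝ u)
    (hu2' : Integrable (fun x => ‖deriv u x‖ ^ 2)) (a b : ℝ) :
    ∫ t in a..b, deriv u t = u b - u a :=
  integral_eq_sub_of_hasDerivAt (fun t _ => (hu t).hasDerivAt) (aux_iint u hu2' a b)

lemma aux_incr (u : ℝ → ℂ) (hu : Differentiable ℝ u)
    (hu2' : Integrable (fun x => ‖deriv u x‖ ^ 2)) (s : ℝ) :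
    ‖u s - u 0‖ ≤ Real.sqrt |s| * Real.sqrt (∫ x : ℝ, ‖deriv u x‖ ^ 2) := by
  set B := ∫ x : ℝ, ‖deriv u x‖ ^ 2 with hBdef
  have hB : 0 ≤ B := integral_nonneg fun x => by positivity
  have hvol : (volume (Set.uIoc 0 s)).toReal = |s| := by
    rw [Set.uIoc, Real.volume_Ioc, ENNReal.toReal_ofReal (by simp [min_le_max])]
    rcases le_total 0 s with h | h
    · simp [max_eq_right h, min_eq_left h, abs_of_nonneg h]
    · simp [max_eq_left h, min_eq_right h, abs_of_nonpos h]
  have hconst : ∀ d : ℝ, IntegrableOn (fun _ : ℝ => d) (Set.uIoc 0 s) volume :=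
    fun d => integrableOn_const measure_Ioc_lt_top.ne
  have key : ∀ c : ℝ, 0 < c → ‖u s - u 0‖ ≤ B / (2*c) + c * |s| / 2 := by
    intro c hc
    rw [← aux_ftc u hu hu2' 0 s]
    have h1 : ‖∫ t in (0:ℝ)..s, deriv u t‖ ≤ ∫ t in Set.uIoc 0 s, ‖deriv u t‖ :=
      intervalIntegral.norm_integral_le_integral_norm_uIoc
    have hf : IntegrableOn (fun t => ‖deriv u t‖ ^ 2 / (2*c)) (Set.uIoc 0 s) volume :=
      hu2'.integrableOn.div_const (2*c)
    have h2 : ∫ t in Set.uIoc 0 s, ‖deriv u t‖ ≤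
        ∫ t in Set.uIoc 0 s, (‖deriv u t‖ ^ 2 / (2*c) + c/2) := by
      refine setIntegral_mono_on ?_ (hf.add (hconst _)) measurableSet_uIoc ?_
      · have := (aux_iint u hu2' 0 s)
        rw [intervalIntegrable_iff] at this
        exact this.norm
      · intro t _
        have h : (0:ℝ) ≤ (‖deriv u t‖ - c)^2 := sq_nonneg _
        have := norm_nonneg (deriv u t)
        rw [div_add_div _ _ (by positivity) (by norm_num), le_div_iff₀ (by positivity)]
        nlinarith
    have h4 : ∫ t in Set.uIoc 0 s, (‖deriv u t‖ ^ 2 / (2*c) + c/2)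
        = (∫ t in Set.uIoc 0 s, ‖deriv u t‖ ^ 2 / (2*c)) + ∫ t in Set.uIoc 0 s, (c/2 : ℝ) :=
      integral_add hf (hconst _)
    have h5 : (∫ t in Set.uIoc 0 s, ‖deriv u t‖ ^ 2 / (2*c))
        = (∫ t in Set.uIoc 0 s, ‖deriv u t‖ ^ 2) / (2*c) := integral_div _ _
    have h6 : (∫ t in Set.uIoc 0 s, ‖deriv u t‖ ^ 2) ≤ B :=
      setIntegral_le_integral hu2' (by filter_upwards with x using by positivity)
    have h7 : ∫ t in Set.uIoc 0 s, (c/2 : ℝ) = (c/2) * |s| := by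
      rw [setIntegral_const, smul_eq_mul, mul_comm, measureReal_def, hvol, mul_comm]
    have h8 : (∫ t in Set.uIoc 0 s, ‖deriv u t‖ ^ 2) / (2*c) ≤ B / (2*c) :=
      div_le_div_of_nonneg_right h6 (by positivity)
    calc ‖∫ t in (0:ℝ)..s, deriv u t‖ ≤ _ := h1
      _ ≤ _ := h2
      _ = _ := h4
      _ ≤ B / (2*c) + c * |s| / 2 := by rw [h5, h7]; linarith
  rcases eq_or_ne s 0 with rfl | hs
  · simp only [sub_self, norm_zero, abs_zero, Real.sqrt_zero, zero_mul]; exact le_refl 0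
  have habs : 0 < |s| := abs_pos.2 hs
  rcases eq_or_lt_of_le hB with hB0 | hB0
  · have hsqB : Real.sqrt B = 0 := by rw [← hB0, Real.sqrt_zero]
    rw [hsqB, mul_zero]
    refine le_of_forall_pos_le_add fun δ hδ => ?_
    have h9 := key (2*δ/|s|) (by positivity)
    rw [← hB0] at h9
    calc ‖u s - u 0‖ ≤ 0 / (2*(2*δ/|s|)) + (2*δ/|s|) * |s| / 2 := h9
      _ = δ := by field_simp; ring
      _ ≤ 0 + δ := by linarith
  · have hc : 0 < Real.sqrt B / Real.sqrt |s| := by positivity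
    have h9 := key _ hc
    have hBs : Real.sqrt B * Real.sqrt B = B := Real.mul_self_sqrt hB
    have hss : Real.sqrt |s| * Real.sqrt |s| = |s| := Real.mul_self_sqrt habs.le
    have hsB : 0 < Real.sqrt B := Real.sqrt_pos.2 hB0
    have hsS : 0 < Real.sqrt |s| := Real.sqrt_pos.2 habs
    have e1 : B / (2*(Real.sqrt B / Real.sqrt |s|)) = Real.sqrt |s| * Real.sqrt B / 2 := by
      field_simp; linear_combination (-1) * hBs
    have e2 : (Real.sqrt B / Real.sqrt |s|) * |s| / 2 = Real.sqrt |s| * Real.sqrt B / 2 := by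
      field_simp; linear_combination (-1) * hss
    rw [e1, e2] at h9
    linarith

lemma aux_sup (u : ℝ → ℂ) (hu : Differentiable ℝ u)
    (hu2 : Integrable (fun x => ‖u x‖ ^ 2))
    (hu2' : Integrable (fun x => ‖deriv u x‖ ^ 2)) (x : ℝ) :
    ‖u x‖ ^ 2 ≤ ((∫ t : ℝ, ‖u t‖ ^ 2) + ∫ t : ℝ, ‖deriv u t‖ ^ 2) / 2 := by
  set A := ∫ t : ℝ, ‖u t‖ ^ 2 with hAdef
  set B := ∫ t : ℝ, ‖deriv u t‖ ^ 2 with hBdef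
  have hA : 0 ≤ A := integral_nonneg fun t => by positivity
  set g : ℝ → ℝ := fun t => ‖u t‖ ^ 2 with hgdef
  set g' : ℝ → ℝ := fun t =>
    2 * ((u t).re * (deriv u t).re + (u t).im * (deriv u t).im) with hg'def
  have hgc : Continuous g := (hu.continuous.norm.pow 2)
  have hg : ∀ t : ℝ, HasDerivAt g (g' t) t := by
    intro t
    have hre : HasDerivAt (fun t => (u t).re) ((deriv u t).re) t :=
      Complex.reCLM.hasFDerivAt.comp_hasDerivAt t (hu t).hasDerivAt
    have him : HasDerivAt (fun t => (u t).im) ((deriv u t).im) t :=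
      Complex.imCLM.hasFDerivAt.comp_hasDerivAt t (hu t).hasDerivAt
    have h2 : HasDerivAt (fun t => (u t).re ^ 2 + (u t).im ^ 2)
        (2 * (u t).re ^ 1 * (deriv u t).re + 2 * (u t).im ^ 1 * (deriv u t).im) t := by
      exact ((hre.pow 2).add (him.pow 2))
    have heq : g = fun t => (u t).re ^ 2 + (u t).im ^ 2 := by
      funext t
      simp [hgdef, Complex.sq_norm, Complex.normSq_apply]
      ring
    rw [heq, hg'def]
    convert h2 using 1
    ring
  have hptb : ∀ t : ℝ, |g' t| ≤ ‖u t‖ ^ 2 + ‖deriv u t‖ ^ 2 := by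
    intro t
    have h1 : ‖u t‖ ^ 2 = (u t).re ^ 2 + (u t).im ^ 2 := by
      simp [Complex.sq_norm, Complex.normSq_apply]; ring
    have h2 : ‖deriv u t‖ ^ 2 = (deriv u t).re ^ 2 + (deriv u t).im ^ 2 := by
      simp [Complex.sq_norm, Complex.normSq_apply]; ring
    have h3 : g' t = 2 * ((u t).re * (deriv u t).re + (u t).im * (deriv u t).im) := rfl
    rw [h1, h2, abs_le, h3]
    constructor
    · nlinarith [sq_nonneg ((u t).re + (deriv u t).re), sq_nonneg ((u t).im + (deriv u t).im)]
    · nlinarith [sq_nonneg ((u t).re - (deriv u t).re), sq_nonneg ((u t).im - (deriv u t).im)]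
  have hg'm : Measurable g' := by
    have h1 : Measurable u := hu.continuous.measurable
    have h2 : Measurable (deriv u) := measurable_deriv u
    fun_prop
  have hg'int : Integrable g' := by
    refine (hu2.add hu2').mono' hg'm.aestronglyMeasurable ?_
    filter_upwards with t
    rw [Real.norm_eq_abs]
    exact hptb t
  have hDle : ∫ t : ℝ, |g' t| ≤ A + B := by
    rw [hAdef, hBdef, ← integral_add hu2 hu2']
    exact integral_mono hg'int.abs (hu2.add hu2') hptb
  -- main averaging step
  have key : ∀ r : ℝ, 0 < r → 2 * g x ≤ 2 * A / r + (A + B) := by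
    intro r hr
    obtain ⟨t₁, ht₁mem, ht₁min⟩ :=
      isCompact_Icc.exists_isMinOn (Set.nonempty_Icc.2 (by linarith : x - r ≤ x))
        hgc.continuousOn
    obtain ⟨t₂, ht₂mem, ht₂min⟩ :=
      isCompact_Icc.exists_isMinOn (Set.nonempty_Icc.2 (by linarith : x ≤ x + r))
        hgc.continuousOn
    have havg : ∀ (p q : ℝ) (t : ℝ), t ∈ Set.Icc p q → (∀ w ∈ Set.Icc p q, g t ≤ g w) →
        q - p = r → g t * r ≤ A := by
      intro p q t htmem htmin hpq
      have hpq' : p ≤ q := by nlinarith [htmem.1, htmem.2, Set.nonempty_Icc.1 ⟨t, htmem⟩]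
      have h1 : g t * r = ∫ w in Set.Ioc p q, g t := by
        rw [setIntegral_const, smul_eq_mul, measureReal_def, Real.volume_Ioc,
          ENNReal.toReal_ofReal (by linarith), hpq, mul_comm]
      rw [h1]
      have h2 : ∫ w in Set.Ioc p q, g t ≤ ∫ w in Set.Ioc p q, g w := by
        refine setIntegral_mono_on (integrableOn_const measure_Ioc_lt_top.ne)
          hu2.integrableOn measurableSet_Ioc ?_
        exact fun w hw => htmin w (Set.Ioc_subset_Icc_self hw)
      refine h2.trans (setIntegral_le_integral hu2 ?_)
      filter_upwards with w using by positivity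
    have h1 : g t₁ * r ≤ A := havg _ _ _ ht₁mem (fun w hw => ht₁min hw) (by ring)
    have h2 : g t₂ * r ≤ A := havg _ _ _ ht₂mem (fun w hw => ht₂min hw) (by ring)
    -- FTC part
    have hftc1 : g x - g t₁ = ∫ w in t₁..x, g' w :=
      (integral_eq_sub_of_hasDerivAt (fun w _ => hg w) hg'int.intervalIntegrable).symm
    have hftc2 : g t₂ - g x = ∫ w in x..t₂, g' w :=
      (integral_eq_sub_of_hasDerivAt (fun w _ => hg w) hg'int.intervalIntegrable).symm
    have hb1 : ∫ w in t₁..x, g' w ≤ ∫ w in t₁..x, |g' w| :=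
      integral_mono_on ht₁mem.2 hg'int.intervalIntegrable hg'int.abs.intervalIntegrable
        (fun w _ => le_abs_self _)
    have hb2 : -(∫ w in x..t₂, g' w) ≤ ∫ w in x..t₂, |g' w| := by
      rw [← intervalIntegral.integral_neg]
      exact integral_mono_on ht₂mem.1 hg'int.neg.intervalIntegrable
        hg'int.abs.intervalIntegrable (fun w _ => neg_le_abs _)
    have hsum : (∫ w in t₁..x, |g' w|) + ∫ w in x..t₂, |g' w| = ∫ w in t₁..t₂, |g' w| :=
      integral_add_adjacent_intervals hg'int.abs.intervalIntegrable
        hg'int.abs.intervalIntegrable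
    have ht₁₂ : t₁ ≤ t₂ := le_trans ht₁mem.2 ht₂mem.1
    have hglobal : ∫ w in t₁..t₂, |g' w| ≤ ∫ t : ℝ, |g' t| := by
      rw [intervalIntegral.integral_of_le ht₁₂]
      exact setIntegral_le_integral hg'int.abs
        (by filter_upwards with w using abs_nonneg _)
    have hineq : 2 * g x ≤ g t₁ + g t₂ + (A + B) := by nlinarith
    have hr1 : g t₁ ≤ A / r := by rw [le_div_iff₀ hr]; exact h1
    have hr2 : g t₂ ≤ A / r := by rw [le_div_iff₀ hr]; exact h2
    have : 2 * A / r = A / r + A / r := by ring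
    linarith
  -- pass to the limit r → ∞
  have hlim : Tendsto (fun r : ℝ => 2 * A / r + (A + B)) atTop (nhds (0 + (A + B))) :=
    (tendsto_const_nhds.div_atTop tendsto_id).add tendsto_const_nhds
  rw [zero_add] at hlim
  have hev : ∀ᶠ r in atTop, 2 * g x ≤ 2 * A / r + (A + B) := by
    filter_upwards [eventually_gt_atTop 0] with r hr using key r hr
  have hfin : 2 * g x ≤ A + B := ge_of_tendsto hlim hev
  have hgoal : g x ≤ (A + B) / 2 := by linarith
  exact hgoal

theorem stmt12 (V₀ : ℝ → ℝ) (hVm : Measurable V₀)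
    (hV2 : Integrable (fun x => (V₀ x) ^ 2))
    (hVnorm : (∫ x : ℝ, V₀ x) = 1)
    (hVmom : Integrable (fun x => |x| ^ ((1 : ℝ) / 2) * |V₀ x|))
    (β a ε : ℝ) (ha : 0 < a) (hε : 0 < ε)
    (u v : ℝ → ℂ) (hu : Differentiable ℝ u) (hv : Differentiable ℝ v)
    (hu2 : Integrable (fun x => ‖u x‖ ^ 2))
    (hu2' : Integrable (fun x => ‖deriv u x‖ ^ 2))
    (hv2 : Integrable (fun x => ‖v x‖ ^ 2))
    (hv2' : Integrable (fun x => ‖deriv v x‖ ^ 2)) :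
    ‖((β / a ^ 2 : ℝ) : ℂ) *
        (u 0 * (starRingEnd ℂ) (v 0) -
          ((1 / ε : ℝ) : ℂ) *
            ∫ x : ℝ, ((V₀ (x / ε) : ℝ) : ℂ) * u x * (starRingEnd ℂ) (v x))‖ ≤
      Real.sqrt 2 * Real.sqrt ε * (|β| / a ^ 2) *
        (∫ x : ℝ, |x| ^ ((1 : ℝ) / 2) * |V₀ x|) * W12norm u * W12norm v := by
  have hAu : 0 ≤ ∫ t : ℝ, ‖u t‖ ^ 2 := integral_nonneg fun t => by positivity
  have hBu : 0 ≤ ∫ t : ℝ, ‖deriv u t‖ ^ 2 := integral_nonneg fun t => by positivity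
  have hAv : 0 ≤ ∫ t : ℝ, ‖v t‖ ^ 2 := integral_nonneg fun t => by positivity
  have hBv : 0 ≤ ∫ t : ℝ, ‖deriv v t‖ ^ 2 := integral_nonneg fun t => by positivity
  have hWu : 0 ≤ W12norm u := Real.sqrt_nonneg _
  have hWv : 0 ≤ W12norm v := Real.sqrt_nonneg _
  -- sup bounds
  have hsupu : ∀ t : ℝ, ‖u t‖ ≤ W12norm u / Real.sqrt 2 := by
    intro t
    have h1 := aux_sup u hu hu2 hu2' t
    have h2 : ‖u t‖ = Real.sqrt (‖u t‖ ^ 2) := (Real.sqrt_sq (norm_nonneg _)).symm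
    rw [h2, W12norm, ← Real.sqrt_div' _ (by norm_num)]
    exact Real.sqrt_le_sqrt h1
  have hsupv : ∀ t : ℝ, ‖v t‖ ≤ W12norm v / Real.sqrt 2 := by
    intro t
    have h1 := aux_sup v hv hv2 hv2' t
    have h2 : ‖v t‖ = Real.sqrt (‖v t‖ ^ 2) := (Real.sqrt_sq (norm_nonneg _)).symm
    rw [h2, W12norm, ← Real.sqrt_div' _ (by norm_num)]
    exact Real.sqrt_le_sqrt h1
  -- derivative L² norms bounded by W12
  have hderu : Real.sqrt (∫ x : ℝ, ‖deriv u x‖ ^ 2) ≤ W12norm u :=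
    Real.sqrt_le_sqrt (le_add_of_nonneg_left hAu)
  have hderv : Real.sqrt (∫ x : ℝ, ‖deriv v x‖ ^ 2) ≤ W12norm v :=
    Real.sqrt_le_sqrt (le_add_of_nonneg_left hAv)
  -- pointwise key estimate
  have hkey : ∀ y : ℝ, ‖u 0 * (starRingEnd ℂ) (v 0) - u (ε*y) * (starRingEnd ℂ) (v (ε*y))‖
      ≤ Real.sqrt 2 * Real.sqrt ε * Real.sqrt |y| * W12norm u * W12norm v := by
    intro y
    set s := ε * y with hs
    have hdecomp : u 0 * (starRingEnd ℂ) (v 0) - u s * (starRingEnd ℂ) (v s)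
        = (u 0 - u s) * (starRingEnd ℂ) (v 0) + u s * (starRingEnd ℂ) (v 0 - v s) := by
      rw [map_sub]; ring
    have h1 : ‖u 0 - u s‖ ≤ Real.sqrt |s| * Real.sqrt (∫ x : ℝ, ‖deriv u x‖ ^ 2) := by
      rw [norm_sub_rev]; exact aux_incr u hu hu2' s
    have h2 : ‖v 0 - v s‖ ≤ Real.sqrt |s| * Real.sqrt (∫ x : ℝ, ‖deriv v x‖ ^ 2) := by
      rw [norm_sub_rev]; exact aux_incr v hv hv2' s
    have hss : Real.sqrt |s| = Real.sqrt ε * Real.sqrt |y| := by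
      rw [hs, abs_mul, abs_of_pos hε, Real.sqrt_mul hε.le]
    have hsy : 0 ≤ Real.sqrt ε * Real.sqrt |y| := by positivity
    have e1 : ‖(u 0 - u s) * (starRingEnd ℂ) (v 0)‖ ≤
        (Real.sqrt ε * Real.sqrt |y| * W12norm u) * (W12norm v / Real.sqrt 2) := by
      rw [norm_mul, RCLike.norm_conj]
      refine mul_le_mul ?_ (hsupv 0) (norm_nonneg _) (by positivity)
      rw [← hss]
      calc ‖u 0 - u s‖ ≤ _ := h1
        _ ≤ Real.sqrt |s| * W12norm u :=
          mul_le_mul_of_nonneg_left hderu (Real.sqrt_nonneg _)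
    have e2 : ‖u s * (starRingEnd ℂ) (v 0 - v s)‖ ≤
        (W12norm u / Real.sqrt 2) * (Real.sqrt ε * Real.sqrt |y| * W12norm v) := by
      rw [norm_mul, RCLike.norm_conj]
      refine mul_le_mul (hsupu s) ?_ (norm_nonneg _) (by positivity)
      rw [← hss]
      calc ‖v 0 - v s‖ ≤ _ := h2
        _ ≤ Real.sqrt |s| * W12norm v :=
          mul_le_mul_of_nonneg_left hderv (Real.sqrt_nonneg _)
    have hnorm : ‖u 0 * (starRingEnd ℂ) (v 0) - u s * (starRingEnd ℂ) (v s)‖ ≤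
        (Real.sqrt ε * Real.sqrt |y| * W12norm u) * (W12norm v / Real.sqrt 2)
        + (W12norm u / Real.sqrt 2) * (Real.sqrt ε * Real.sqrt |y| * W12norm v) := by
      rw [hdecomp]
      exact (norm_add_le _ _).trans (add_le_add e1 e2)
    have hfinal : (Real.sqrt ε * Real.sqrt |y| * W12norm u) * (W12norm v / Real.sqrt 2)
        + (W12norm u / Real.sqrt 2) * (Real.sqrt ε * Real.sqrt |y| * W12norm v)
        = Real.sqrt 2 * Real.sqrt ε * Real.sqrt |y| * W12norm u * W12norm v := by
      have h2pos : (0:ℝ) < Real.sqrt 2 := by positivity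
      have hdiv : (2:ℝ) / Real.sqrt 2 = Real.sqrt 2 := Real.div_sqrt
      have h22 : Real.sqrt 2 * Real.sqrt 2 = 2 := Real.mul_self_sqrt (by norm_num)
      field_simp
      linear_combination (-(Real.sqrt |y| * W12norm u * W12norm v)) * h22
    rw [hfinal] at hnorm
    exact hnorm
  -- V₀ is integrable
  have hV1 : Integrable V₀ := by
    have hind : Integrable ((Set.Icc (-1:ℝ) 1).indicator (fun _ => (1:ℝ))) := by
      rw [integrable_indicator_iff measurableSet_Icc]
      exact integrableOn_const measure_Icc_lt_top.ne
    refine ((hV2.add hVmom).add hind).mono' hVm.aestronglyMeasurable ?_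
    filter_upwards with x
    rw [Real.norm_eq_abs]
    have hind0 : 0 ≤ (Set.Icc (-1:ℝ) 1).indicator (fun _ => (1:ℝ)) x :=
      Set.indicator_nonneg (fun _ _ => by norm_num) x
    have hmom0 : 0 ≤ |x| ^ ((1:ℝ)/2) * |V₀ x| := by positivity
    have hsq0 : 0 ≤ V₀ x ^ 2 := sq_nonneg _
    rcases le_or_gt 1 |V₀ x| with h1 | h1
    · have : |V₀ x| ≤ V₀ x ^ 2 := by nlinarith [sq_abs (V₀ x)]
      simp only [Pi.add_apply]
      linarith
    rcases le_or_gt 1 |x| with h2 | h2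
    · have hx12 : 1 ≤ |x| ^ ((1:ℝ)/2) := by
        rw [← Real.sqrt_eq_rpow]
        exact Real.one_le_sqrt.2 h2
      have : |V₀ x| ≤ |x| ^ ((1:ℝ)/2) * |V₀ x| :=
        le_mul_of_one_le_left (abs_nonneg _) hx12
      simp only [Pi.add_apply]
      linarith
    · have hx : x ∈ Set.Icc (-1:ℝ) 1 := by
        constructor <;> [linarith [neg_abs_le x]; linarith [le_abs_self x]]
      have : (Set.Icc (-1:ℝ) 1).indicator (fun _ => (1:ℝ)) x = 1 :=
        Set.indicator_of_mem hx _
      simp only [Pi.add_apply]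
      rw [this] at hind0 ⊢
      linarith
  -- change of variables
  have hcast : Measurable fun y : ℝ => ((V₀ y : ℝ) : ℂ) :=
    Complex.measurable_ofReal.comp hVm
  have hsub : (∫ y : ℝ, ((V₀ y : ℝ) : ℂ) * u (ε*y) * (starRingEnd ℂ) (v (ε*y)))
      = ((1/ε : ℝ) : ℂ) * ∫ x : ℝ, ((V₀ (x/ε) : ℝ) : ℂ) * u x * (starRingEnd ℂ) (v x) := by
    have h0 := MeasureTheory.Measure.integral_comp_mul_left
      (g := fun x => ((V₀ (x/ε) : ℝ) : ℂ) * u x * (starRingEnd ℂ) (v x)) ε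
    have hfun : (fun y : ℝ => ((V₀ (ε*y/ε) : ℝ) : ℂ) * u (ε*y) * (starRingEnd ℂ) (v (ε*y)))
        = fun y : ℝ => ((V₀ y : ℝ) : ℂ) * u (ε*y) * (starRingEnd ℂ) (v (ε*y)) := by
      funext y
      rw [mul_div_cancel_left₀ _ hε.ne']
    rw [hfun] at h0
    rw [h0, Complex.real_smul, abs_of_pos (inv_pos.2 hε), one_div]
  -- integrability of both integrands on the y side
  have hmeas2 : AEStronglyMeasurable
      (fun y : ℝ => ((V₀ y : ℝ) : ℂ) * u (ε*y) * (starRingEnd ℂ) (v (ε*y))) volume := by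
    have hcu : Continuous fun y : ℝ => u (ε*y) :=
      hu.continuous.comp (continuous_const.mul continuous_id)
    have hcv : Continuous fun y : ℝ => (starRingEnd ℂ) (v (ε*y)) :=
      Complex.continuous_conj.comp (hv.continuous.comp (continuous_const.mul continuous_id))
    exact ((hcast.mul hcu.measurable).mul hcv.measurable).aestronglyMeasurable
  have hint2 : Integrable (fun y : ℝ => ((V₀ y : ℝ) : ℂ) * u (ε*y) * (starRingEnd ℂ) (v (ε*y))) := by
    refine (hV1.abs.mul_const ((W12norm u / Real.sqrt 2) * (W12norm v / Real.sqrt 2))).mono'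
      hmeas2 ?_
    filter_upwards with y
    rw [norm_mul, norm_mul, Complex.norm_real, RCLike.norm_conj, Real.norm_eq_abs, mul_assoc]
    refine mul_le_mul_of_nonneg_left ?_ (abs_nonneg _)
    exact mul_le_mul (hsupu _) (hsupv _) (norm_nonneg _) (by positivity)
  have hint1 : Integrable (fun y : ℝ => ((V₀ y : ℝ) : ℂ) * (u 0 * (starRingEnd ℂ) (v 0))) :=
    hV1.ofReal.mul_const _
  -- the normalization identity
  have hnormal : (∫ y : ℝ, ((V₀ y : ℝ) : ℂ) * (u 0 * (starRingEnd ℂ) (v 0)))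
      = u 0 * (starRingEnd ℂ) (v 0) := by
    rw [MeasureTheory.integral_mul_const,
      show (∫ y : ℝ, ((V₀ y : ℝ) : ℂ)) = (((∫ y : ℝ, V₀ y : ℝ)) : ℂ) from integral_ofReal,
      hVnorm, Complex.ofReal_one, one_mul]
  -- rewrite the difference as a single integral
  have hdiff : u 0 * (starRingEnd ℂ) (v 0) -
      ((1 / ε : ℝ) : ℂ) * ∫ x : ℝ, ((V₀ (x / ε) : ℝ) : ℂ) * u x * (starRingEnd ℂ) (v x)
      = ∫ y : ℝ, ((V₀ y : ℝ) : ℂ) *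
          (u 0 * (starRingEnd ℂ) (v 0) - u (ε*y) * (starRingEnd ℂ) (v (ε*y))) := by
    have hint2' : Integrable
        (fun y : ℝ => ((V₀ y : ℝ) : ℂ) * (u (ε*y) * (starRingEnd ℂ) (v (ε*y)))) := by
      have := hint2
      simp only [mul_assoc] at this
      exact this
    have hstep : (∫ y : ℝ, ((V₀ y : ℝ) : ℂ) *
        (u 0 * (starRingEnd ℂ) (v 0) - u (ε*y) * (starRingEnd ℂ) (v (ε*y))))
        = (∫ y : ℝ, ((V₀ y : ℝ) : ℂ) * (u 0 * (starRingEnd ℂ) (v 0)))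
          - ∫ y : ℝ, ((V₀ y : ℝ) : ℂ) * (u (ε*y) * (starRingEnd ℂ) (v (ε*y))) := by
      rw [← integral_sub hint1 hint2']
      congr 1
      funext y
      ring
    have hassoc : (∫ y : ℝ, ((V₀ y : ℝ) : ℂ) * (u (ε*y) * (starRingEnd ℂ) (v (ε*y))))
        = ∫ y : ℝ, ((V₀ y : ℝ) : ℂ) * u (ε*y) * (starRingEnd ℂ) (v (ε*y)) := by
      congr 1
      funext y
      ring
    rw [hstep, hnormal, hassoc, hsub]
  -- bound the single integral
  set K := Real.sqrt 2 * Real.sqrt ε * W12norm u * W12norm v with hK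
  have hKnonneg : 0 ≤ K := by positivity
  have hbound : ‖∫ y : ℝ, ((V₀ y : ℝ) : ℂ) *
      (u 0 * (starRingEnd ℂ) (v 0) - u (ε*y) * (starRingEnd ℂ) (v (ε*y)))‖
      ≤ K * ∫ x : ℝ, |x| ^ ((1 : ℝ) / 2) * |V₀ x| := by
    rw [← MeasureTheory.integral_const_mul]
    refine norm_integral_le_of_norm_le (hVmom.const_mul K) ?_
    filter_upwards with y
    rw [norm_mul, Complex.norm_real, Real.norm_eq_abs]
    have h1 := hkey y
    have h2 : |y| ^ ((1:ℝ)/2) = Real.sqrt |y| := (Real.sqrt_eq_rpow _).symm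
    calc |V₀ y| * ‖u 0 * (starRingEnd ℂ) (v 0) - u (ε*y) * (starRingEnd ℂ) (v (ε*y))‖
        ≤ |V₀ y| * (Real.sqrt 2 * Real.sqrt ε * Real.sqrt |y| * W12norm u * W12norm v) :=
          mul_le_mul_of_nonneg_left h1 (abs_nonneg _)
      _ = K * (|y| ^ ((1:ℝ)/2) * |V₀ y|) := by rw [h2, hK]; ring
  -- final assembly
  have hI0 : 0 ≤ ∫ x : ℝ, |x| ^ ((1 : ℝ) / 2) * |V₀ x| :=
    integral_nonneg fun x => by positivity
  rw [norm_mul, Complex.norm_real, Real.norm_eq_abs, hdiff]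
  have hco : |β / a ^ 2| = |β| / a ^ 2 := by
    rw [abs_div, abs_pow, abs_of_pos ha]
  rw [hco]
  calc |β| / a ^ 2 * ‖∫ y : ℝ, ((V₀ y : ℝ) : ℂ) *
        (u 0 * (starRingEnd ℂ) (v 0) - u (ε*y) * (starRingEnd ℂ) (v (ε*y)))‖
      ≤ |β| / a ^ 2 * (K * ∫ x : ℝ, |x| ^ ((1 : ℝ) / 2) * |V₀ x|) :=
        mul_le_mul_of_nonneg_left hbound (by positivity)
    _ = Real.sqrt 2 * Real.sqrt ε * (|β| / a ^ 2) *
        (∫ x : ℝ, |x| ^ ((1 : ℝ) / 2) * |V₀ x|) * W12norm u * W12norm v := by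
        rw [hK]; ring
end

section
/- Let j ∈ {−1, +1}, and let V_j : ℝ → ℝ be measurable and square-integrable with ∫_ℝ V_j(x) dx = 1 and I_j := ∫_ℝ |x|^{1/2}|V_j(x)| dx < ∞. Let β ∈ ℝ \ {0}, a > 0, ε > 0, and let u, v : ℝ → ℂ be differentiable on ℝ with u, u', v, v' square-integrable. Define t^{(j)}_{a,ε}[u,v] := (2/β − 1/a)·( u(j·a)·conj(v(j·a)) − (1/ε)∫_ℝ V_j((x − j·a)/ε)·u(x)·conj(v(x)) dx ). Then |t^{(j)}_{a,ε}[u,v]| ≤ √2·√ε·|2/β − 1/a|·I_j·‖u‖_{W^{1,2}}·‖v‖_{W^{1,2}}. -/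
open MeasureTheory Filter Set Topology

lemma csAux {S P Q : ℝ} (hP : 0 ≤ P) (hQ : 0 ≤ Q)
    (h : ∀ c : ℝ, 0 < c → S ≤ (c * P + Q / c) / 2) :
    S ≤ Real.sqrt P * Real.sqrt Q := by
  rcases hP.eq_or_lt with hP0 | hP0
  · by_contra hc
    push_neg at hc
    rw [← hP0, Real.sqrt_zero, zero_mul] at hc
    rcases hQ.eq_or_lt with hQ0 | hQ0
    · have := h 1 one_pos
      rw [← hP0, ← hQ0] at this
      norm_num at this
      exact absurd this (not_le.mpr hc)
    · have hS : 0 < S := hc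
      have := h (Q / S) (div_pos hQ0 hS)
      rw [← hP0, mul_zero, zero_add] at this
      have hQS : Q / (Q / S) = S := by field_simp
      rw [hQS] at this
      linarith
  · rcases hQ.eq_or_lt with hQ0 | hQ0
    · by_contra hc
      push_neg at hc
      rw [← hQ0, Real.sqrt_zero, mul_zero] at hc
      have hS : 0 < S := hc
      have := h (S / P) (div_pos hS hP0)
      rw [← hQ0] at this
      have : S ≤ (S / P * P + 0) / 2 := by simpa using this
      rw [div_mul_cancel₀ _ (ne_of_gt hP0)] at this
      linarith
    · have hp : 0 < Real.sqrt P := Real.sqrt_pos.mpr hP0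
      have hq : 0 < Real.sqrt Q := Real.sqrt_pos.mpr hQ0
      have hPe : Real.sqrt P ^ 2 = P := Real.sq_sqrt hP
      have hQe : Real.sqrt Q ^ 2 = Q := Real.sq_sqrt hQ
      have := h (Real.sqrt Q / Real.sqrt P) (div_pos hq hp)
      calc S ≤ (Real.sqrt Q / Real.sqrt P * P + Q / (Real.sqrt Q / Real.sqrt P)) / 2 := this
        _ = Real.sqrt P * Real.sqrt Q := by
            have e1 : Real.sqrt Q / Real.sqrt P * P = Real.sqrt Q * Real.sqrt P := by
              rw [div_mul_eq_mul_div, div_eq_iff hp.ne']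
              linear_combination (-Real.sqrt Q) * hPe
            have e2 : Q / (Real.sqrt Q / Real.sqrt P) = Real.sqrt Q * Real.sqrt P := by
              rw [div_div_eq_mul_div, div_eq_iff hq.ne']
              linear_combination (-Real.sqrt P) * hQe
            rw [e1, e2]; ring

lemma limit_eq_zero_atTop {g : ℝ → ℝ} (hg : Integrable g) (hnn : ∀ t, 0 ≤ g t)
    {L : ℝ} (hL : Tendsto g atTop (𝓝 L)) : L = 0 := by
  by_contra hne
  have hL0 : 0 ≤ L := ge_of_tendsto hL (Eventually.of_forall hnn)
  have hLpos : 0 < L := hL0.lt_of_ne (Ne.symm hne)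
  have hev : ∀ᶠ t in atTop, L / 2 ≤ g t := hL.eventually_const_le (half_lt_self hLpos)
  obtain ⟨M, hM⟩ := eventually_atTop.mp hev
  have hfin := hg.measure_ge_lt_top (half_pos hLpos)
  have hsub : Set.Ici M ⊆ {t | L / 2 ≤ g t} := fun t ht => hM t ht
  have := measure_mono (μ := volume) hsub
  rw [Real.volume_Ici, top_le_iff] at this
  rw [this] at hfin
  exact lt_irrefl _ hfin

lemma limit_eq_zero_atBot {g : ℝ → ℝ} (hg : Integrable g) (hnn : ∀ t, 0 ≤ g t)
    {L : ℝ} (hL : Tendsto g atBot (𝓝 L)) : L = 0 := by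
  by_contra hne
  have hL0 : 0 ≤ L := ge_of_tendsto hL (Eventually.of_forall hnn)
  have hLpos : 0 < L := hL0.lt_of_ne (Ne.symm hne)
  have hev : ∀ᶠ t in atBot, L / 2 ≤ g t := hL.eventually_const_le (half_lt_self hLpos)
  obtain ⟨M, hM⟩ := eventually_atBot.mp hev
  have hfin := hg.measure_ge_lt_top (half_pos hLpos)
  have hsub : Set.Iic M ⊆ {t | L / 2 ≤ g t} := fun t ht => hM t ht
  have := measure_mono (μ := volume) hsub
  rw [Real.volume_Iic, top_le_iff] at this
  rw [this] at hfin
  exact lt_irrefl _ hfin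


lemma hasDerivAt_normSq' {f : ℝ → ℂ} (hf : Differentiable ℝ f) (t : ℝ) :
    HasDerivAt (fun s => ‖f s‖ ^ 2)
      ((deriv f t * (starRingEnd ℂ) (f t) + f t * (starRingEnd ℂ) (deriv f t)).re) t := by
  have hd := (hf t).hasDerivAt
  have hc : HasDerivAt (fun s => (starRingEnd ℂ) (f s)) ((starRingEnd ℂ) (deriv f t)) t := by
    simpa using hd.star
  have hp := hd.mul hc
  have h2 := Complex.reCLM.hasFDerivAt.comp_hasDerivAt t hp
  have hfun : (fun s => ‖f s‖ ^ 2) = fun s => (f s * (starRingEnd ℂ) (f s)).re := by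
    funext s
    rw [Complex.mul_conj]
    simp [Complex.sq_norm]
  rw [hfun]
  have : (⇑Complex.reCLM ∘ (f * fun s => (starRingEnd ℂ) (f s))) = fun s => (f s * (starRingEnd ℂ) (f s)).re := rfl
  rw [this] at h2
  simpa using h2

lemma sup_sq_le {f : ℝ → ℂ} (hf : Differentiable ℝ f)
    (h2 : Integrable (fun x => ‖f x‖ ^ 2)) (h2' : Integrable (fun x => ‖deriv f x‖ ^ 2))
    (x : ℝ) :
    ‖f x‖ ^ 2 ≤ Real.sqrt (∫ t : ℝ, ‖f t‖ ^ 2) * Real.sqrt (∫ t : ℝ, ‖deriv f t‖ ^ 2) := by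
  classical
  set g : ℝ → ℝ := fun t => ‖f t‖ ^ 2 with hg
  set G : ℝ → ℝ := fun t =>
    (deriv f t * (starRingEnd ℂ) (f t) + f t * (starRingEnd ℂ) (deriv f t)).re with hGdef
  have hG : ∀ t, HasDerivAt g (G t) t := fun t => hasDerivAt_normSq' hf t
  have m0 : Measurable f := hf.continuous.measurable
  have m1 : Measurable (deriv f) := measurable_deriv f
  have hGmeas : Measurable G :=
    Complex.measurable_re.comp ((m1.mul (continuous_star.measurable.comp m0)).add (m0.mul (continuous_star.measurable.comp m1)))
  have hGb : ∀ t, |G t| ≤ 2 * (‖f t‖ * ‖deriv f t‖) := by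
    intro t
    calc |G t| ≤ ‖deriv f t * (starRingEnd ℂ) (f t) + f t * (starRingEnd ℂ) (deriv f t)‖ :=
          Complex.abs_re_le_norm _
      _ ≤ ‖deriv f t * (starRingEnd ℂ) (f t)‖ + ‖f t * (starRingEnd ℂ) (deriv f t)‖ :=
          norm_add_le _ _
      _ = 2 * (‖f t‖ * ‖deriv f t‖) := by
          simp [norm_mul, RCLike.norm_conj]; ring
  have hGb2 : ∀ t, |G t| ≤ ‖f t‖ ^ 2 + ‖deriv f t‖ ^ 2 := by
    intro t
    refine (hGb t).trans ?_
    nlinarith [sq_nonneg (‖f t‖ - ‖deriv f t‖)]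
  have hGint : Integrable G := by
    refine (h2.add h2').mono' hGmeas.aestronglyMeasurable (ae_of_all _ fun t => ?_)
    simpa [Real.norm_eq_abs] using hGb2 t
  have hFTC : ∀ p q : ℝ, ∫ t in p..q, G t = g q - g p := fun p q =>
    intervalIntegral.integral_eq_sub_of_hasDerivAt (fun t _ => hG t) hGint.intervalIntegrable
  -- limit at +infinity
  have htendT : Tendsto g atTop (𝓝 (g x + ∫ t in Set.Ioi x, G t)) := by
    have h1 := intervalIntegral_tendsto_integral_Ioi x hGint.integrableOn tendsto_id
    have h2t : Tendsto (fun y => g x + ∫ t in x..y, G t) atTop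
        (𝓝 (g x + ∫ t in Set.Ioi x, G t)) := tendsto_const_nhds.add h1
    refine h2t.congr fun y => ?_
    rw [hFTC]; ring
  have hgnn : ∀ t, 0 ≤ g t := fun t => sq_nonneg _
  have hLtop : g x + ∫ t in Set.Ioi x, G t = 0 := limit_eq_zero_atTop h2 hgnn htendT
  -- limit at -infinity
  have htendB : Tendsto g atBot (𝓝 (g x - ∫ t in Set.Iic x, G t)) := by
    have h1 := intervalIntegral_tendsto_integral_Iic x hGint.integrableOn tendsto_id
    have h2t : Tendsto (fun y => g x - ∫ t in y..x, G t) atBot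
        (𝓝 (g x - ∫ t in Set.Iic x, G t)) := tendsto_const_nhds.sub h1
    refine h2t.congr fun y => ?_
    rw [hFTC]; ring
  have hLbot : g x - ∫ t in Set.Iic x, G t = 0 := limit_eq_zero_atBot h2 hgnn htendB
  -- 2 g x ≤ ∫ |G|
  have habs : Integrable (fun t => |G t|) := hGint.abs
  have hsplit : (∫ t in Set.Iic x, |G t|) + ∫ t in Set.Ioi x, |G t| = ∫ t : ℝ, |G t| :=
    intervalIntegral.integral_Iic_add_Ioi habs.integrableOn habs.integrableOn
  have hb1 : g x ≤ ∫ t in Set.Iic x, |G t| := by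
    have : g x = ∫ t in Set.Iic x, G t := by linarith
    rw [this]
    exact integral_mono hGint.integrableOn habs.integrableOn fun t => le_abs_self _
  have hb2 : g x ≤ ∫ t in Set.Ioi x, |G t| := by
    have he : g x = -∫ t in Set.Ioi x, G t := by linarith
    rw [he]
    have := integral_mono (μ := volume.restrict (Set.Ioi x)) hGint.integrableOn.neg
      habs.integrableOn (fun t => neg_le_abs (G t))
    simp only [Pi.neg_apply] at this
    rwa [integral_neg] at this
  have hGabs : (∫ t : ℝ, |G t|) ≤ ∫ t : ℝ, 2 * (‖f t‖ * ‖deriv f t‖) := by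
    refine integral_mono habs ?_ hGb
    refine (h2.add h2').mono' ((m0.norm.mul m1.norm).const_mul 2).aestronglyMeasurable
      (ae_of_all _ fun t => ?_)
    have h := hGb2 t
    have hnn : (0:ℝ) ≤ 2 * (‖f t‖ * ‖deriv f t‖) := by positivity
    rw [Real.norm_eq_abs, abs_of_nonneg hnn]
    simp only [Pi.add_apply, hg]
    nlinarith [sq_nonneg (‖f t‖ - ‖deriv f t‖)]
  have hkey : g x ≤ ∫ t : ℝ, ‖f t‖ * ‖deriv f t‖ := by
    have h1 : 2 * g x ≤ ∫ t : ℝ, 2 * (‖f t‖ * ‖deriv f t‖) := by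
      calc 2 * g x ≤ (∫ t in Set.Iic x, |G t|) + ∫ t in Set.Ioi x, |G t| := by linarith
        _ = ∫ t : ℝ, |G t| := hsplit
        _ ≤ _ := hGabs
    rw [integral_const_mul] at h1
    linarith
  refine hkey.trans ?_
  refine csAux (integral_nonneg fun t => sq_nonneg _) (integral_nonneg fun t => sq_nonneg _)
    fun c hc => ?_
  have hpt : ∀ t : ℝ, ‖f t‖ * ‖deriv f t‖ ≤ (c * ‖f t‖ ^ 2 + ‖deriv f t‖ ^ 2 / c) / 2 := by
    intro t
    nlinarith [sq_nonneg (c * ‖f t‖ - ‖deriv f t‖), hc,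
      div_mul_cancel₀ (‖deriv f t‖ ^ 2) hc.ne']
  have hint : Integrable (fun t => (c * ‖f t‖ ^ 2 + ‖deriv f t‖ ^ 2 / c) / 2) :=
    ((h2.const_mul c).add (h2'.div_const c)).div_const 2
  have := integral_mono ?_ hint hpt
  · rw [integral_div, integral_add (h2.const_mul c) (h2'.div_const c),
      integral_const_mul, integral_div] at this
    linarith
  · refine (h2.add h2').mono' (m0.norm.mul m1.norm).aestronglyMeasurable
      (ae_of_all _ fun t => ?_)
    have hnn : (0:ℝ) ≤ ‖f t‖ * ‖deriv f t‖ := by positivity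
    rw [Real.norm_eq_abs, abs_of_nonneg hnn]
    simp only [Pi.add_apply, hg]
    nlinarith [sq_nonneg (‖f t‖ - ‖deriv f t‖)]

lemma holder_le {f : ℝ → ℂ} (hf : Differentiable ℝ f)
    (h2' : Integrable (fun x => ‖deriv f x‖ ^ 2)) {x y : ℝ} (hxy : x ≤ y) :
    ‖f y - f x‖ ≤ Real.sqrt (y - x) * Real.sqrt (∫ t : ℝ, ‖deriv f t‖ ^ 2) := by
  have m1 : Measurable (deriv f) := measurable_deriv f
  have hmaj : IntegrableOn (fun t => (1 : ℝ) + ‖deriv f t‖ ^ 2) (Set.Ioc x y) :=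
    (integrableOn_const measure_Ioc_lt_top.ne).add h2'.integrableOn
  have hder : IntegrableOn (fun t => ‖deriv f t‖) (Set.Ioc x y) := by
    refine hmaj.mono' m1.norm.aestronglyMeasurable.restrict (ae_of_all _ fun t => ?_)
    rw [Real.norm_eq_abs, abs_of_nonneg (norm_nonneg _)]
    nlinarith [sq_nonneg (‖deriv f t‖ - 1), norm_nonneg (deriv f t)]
  have hderC : IntervalIntegrable (deriv f) volume x y := by
    rw [intervalIntegrable_iff_integrableOn_Ioc_of_le hxy]
    refine hmaj.mono' m1.aestronglyMeasurable.restrict (ae_of_all _ fun t => ?_)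
    nlinarith [sq_nonneg (‖deriv f t‖ - 1), norm_nonneg (deriv f t)]
  have hftc : ∫ t in x..y, deriv f t = f y - f x :=
    intervalIntegral.integral_eq_sub_of_hasDerivAt (fun t _ => (hf t).hasDerivAt) hderC
  rw [← hftc]
  refine (intervalIntegral.norm_integral_le_integral_norm hxy).trans ?_
  rw [intervalIntegral.integral_of_le hxy]
  refine csAux (by linarith) (integral_nonneg fun t => sq_nonneg _) fun c hc => ?_
  have hRint : IntegrableOn (fun t => (c + ‖deriv f t‖ ^ 2 / c) / 2) (Set.Ioc x y) :=
    ((integrableOn_const measure_Ioc_lt_top.ne).add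
      (h2'.integrableOn.div_const c)).div_const 2
  have hmono := setIntegral_mono_on hder hRint measurableSet_Ioc (fun t _ => by
    nlinarith [sq_nonneg (c - ‖deriv f t‖), hc, div_mul_cancel₀ (‖deriv f t‖ ^ 2) hc.ne'])
  have heq : ∫ t in Set.Ioc x y, (c + ‖deriv f t‖ ^ 2 / c) / 2
      = ((∫ _t in Set.Ioc x y, c) + (∫ t in Set.Ioc x y, ‖deriv f t‖ ^ 2) / c) / 2 := by
    rw [integral_div, integral_add (integrableOn_const (C := c) measure_Ioc_lt_top.ne)
      (h2'.integrableOn.div_const c), integral_div]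
  have hconst : (∫ _t in Set.Ioc x y, c) = (y - x) * c := by
    rw [setIntegral_const, Real.volume_real_Ioc_of_le hxy, smul_eq_mul]
  have hQ : (∫ t in Set.Ioc x y, ‖deriv f t‖ ^ 2) ≤ ∫ t : ℝ, ‖deriv f t‖ ^ 2 :=
    setIntegral_le_integral h2' (ae_of_all _ fun t => sq_nonneg _)
  calc (∫ t in Set.Ioc x y, ‖deriv f t‖)
      ≤ ((y - x) * c + (∫ t in Set.Ioc x y, ‖deriv f t‖ ^ 2) / c) / 2 := by
        rw [← hconst]; rw [heq] at hmono; exact hmono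
    _ ≤ (c * (y - x) + (∫ t : ℝ, ‖deriv f t‖ ^ 2) / c) / 2 := by
        have h1 : (∫ t in Set.Ioc x y, ‖deriv f t‖ ^ 2) / c
            ≤ (∫ t : ℝ, ‖deriv f t‖ ^ 2) / c := by
          gcongr
        linarith

lemma holder_bound {f : ℝ → ℂ} (hf : Differentiable ℝ f)
    (h2' : Integrable (fun x => ‖deriv f x‖ ^ 2)) (x y : ℝ) :
    ‖f y - f x‖ ≤ Real.sqrt |y - x| * Real.sqrt (∫ t : ℝ, ‖deriv f t‖ ^ 2) := by
  rcases le_total x y with h | h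
  · rw [abs_of_nonneg (sub_nonneg.mpr h)]
    exact holder_le hf h2' h
  · rw [abs_of_nonpos (sub_nonpos.mpr h), ← norm_neg, neg_sub]
    have := holder_le hf h2' h
    simpa [neg_sub] using this

lemma sup_le_W12 {f : ℝ → ℂ} (hf : Differentiable ℝ f)
    (h2 : Integrable (fun x => ‖f x‖ ^ 2)) (h2' : Integrable (fun x => ‖deriv f x‖ ^ 2))
    (x : ℝ) : ‖f x‖ ≤ W12norm f / Real.sqrt 2 := by
  have hP : 0 ≤ ∫ t : ℝ, ‖f t‖ ^ 2 := integral_nonneg fun t => sq_nonneg _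
  have hQ : 0 ≤ ∫ t : ℝ, ‖deriv f t‖ ^ 2 := integral_nonneg fun t => sq_nonneg _
  have h1 := sup_sq_le hf h2 h2' x
  have h2'' : Real.sqrt (∫ t : ℝ, ‖f t‖ ^ 2) * Real.sqrt (∫ t : ℝ, ‖deriv f t‖ ^ 2)
      ≤ ((∫ t : ℝ, ‖f t‖ ^ 2) + (∫ t : ℝ, ‖deriv f t‖ ^ 2)) / 2 := by
    nlinarith [Real.sq_sqrt hP, Real.sq_sqrt hQ,
      sq_nonneg (Real.sqrt (∫ t : ℝ, ‖f t‖ ^ 2) - Real.sqrt (∫ t : ℝ, ‖deriv f t‖ ^ 2))]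
  have h4 : ‖f x‖ ≤ Real.sqrt (((∫ t : ℝ, ‖f t‖ ^ 2) + (∫ t : ℝ, ‖deriv f t‖ ^ 2)) / 2) := by
    rw [← Real.sqrt_sq (norm_nonneg (f x))]
    exact Real.sqrt_le_sqrt (h1.trans h2'')
  calc ‖f x‖ ≤ _ := h4
    _ = W12norm f / Real.sqrt 2 := by
        rw [W12norm, Real.sqrt_div (by linarith)]

theorem stmt13 (j : ℝ) (hj : j = -1 ∨ j = 1)
    (Vj : ℝ → ℝ) (hVm : Measurable Vj)
    (hV2 : Integrable (fun x => (Vj x) ^ 2))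
    (hVnorm : (∫ x : ℝ, Vj x) = 1)
    (hVmom : Integrable (fun x => |x| ^ ((1 : ℝ) / 2) * |Vj x|))
    (β a ε : ℝ) (hβ : β ≠ 0) (ha : 0 < a) (hε : 0 < ε)
    (u v : ℝ → ℂ) (hu : Differentiable ℝ u) (hv : Differentiable ℝ v)
    (hu2 : Integrable (fun x => ‖u x‖ ^ 2))
    (hu2' : Integrable (fun x => ‖deriv u x‖ ^ 2))
    (hv2 : Integrable (fun x => ‖v x‖ ^ 2))
    (hv2' : Integrable (fun x => ‖deriv v x‖ ^ 2)) :
    ‖((2 / β - 1 / a : ℝ) : ℂ) *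
        (u (j * a) * (starRingEnd ℂ) (v (j * a)) -
          ((1 / ε : ℝ) : ℂ) *
            ∫ x : ℝ, ((Vj ((x - j * a) / ε) : ℝ) : ℂ) * u x * (starRingEnd ℂ) (v x))‖ ≤
      Real.sqrt 2 * Real.sqrt ε * |2 / β - 1 / a| *
        (∫ x : ℝ, |x| ^ ((1 : ℝ) / 2) * |Vj x|) * W12norm u * W12norm v := by
  have hV1 : Integrable Vj := by
    by_contra h
    rw [integral_undef h] at hVnorm
    norm_num at hVnorm
  set c : ℝ := j * a with hcdef
  set w : ℝ → ℂ := fun x => u x * (starRingEnd ℂ) (v x) with hw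
  have hwcont : Continuous w := hu.continuous.mul (continuous_star.comp hv.continuous)
  have Wu0 : 0 ≤ W12norm u := Real.sqrt_nonneg _
  have Wv0 : 0 ≤ W12norm v := Real.sqrt_nonneg _
  have hPu : 0 ≤ ∫ t : ℝ, ‖u t‖ ^ 2 := integral_nonneg fun t => sq_nonneg _
  have hPv : 0 ≤ ∫ t : ℝ, ‖v t‖ ^ 2 := integral_nonneg fun t => sq_nonneg _
  have hQu : 0 ≤ ∫ t : ℝ, ‖deriv u t‖ ^ 2 := integral_nonneg fun t => sq_nonneg _
  have hQv : 0 ≤ ∫ t : ℝ, ‖deriv v t‖ ^ 2 := integral_nonneg fun t => sq_nonneg _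
  have hBu : Real.sqrt (∫ t : ℝ, ‖deriv u t‖ ^ 2) ≤ W12norm u :=
    Real.sqrt_le_sqrt (by linarith)
  have hBv : Real.sqrt (∫ t : ℝ, ‖deriv v t‖ ^ 2) ≤ W12norm v :=
    Real.sqrt_le_sqrt (by linarith)
  have hSu : ∀ x, ‖u x‖ ≤ W12norm u / Real.sqrt 2 := sup_le_W12 hu hu2 hu2'
  have hSv : ∀ x, ‖v x‖ ≤ W12norm v / Real.sqrt 2 := sup_le_W12 hv hv2 hv2'
  have hwbd : ∀ x, ‖w x‖ ≤ (W12norm u / Real.sqrt 2) * (W12norm v / Real.sqrt 2) := by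
    intro x
    calc ‖w x‖ = ‖u x‖ * ‖v x‖ := by rw [hw]; simp [norm_mul, RCLike.norm_conj]
      _ ≤ _ := mul_le_mul (hSu x) (hSv x) (norm_nonneg _) (by positivity)
  -- pointwise difference bound
  have key : ∀ y : ℝ, ‖w c - w (c + ε * y)‖ ≤
      Real.sqrt 2 * Real.sqrt ε * Real.sqrt |y| * (W12norm u * W12norm v) := by
    intro y
    have hd : c + ε * y - c = ε * y := by ring
    have hsd : Real.sqrt |c + ε * y - c| = Real.sqrt ε * Real.sqrt |y| := by
      rw [hd, abs_mul, abs_of_pos hε, Real.sqrt_mul hε.le]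
    have hu_h := holder_bound hu hu2' c (c + ε * y)
    have hv_h := holder_bound hv hv2' c (c + ε * y)
    rw [hsd] at hu_h hv_h
    set s : ℝ := c + ε * y with hs
    have e0 : 0 ≤ Real.sqrt ε * Real.sqrt |y| := by positivity
    have hdecomp : w c - w s =
        u c * ((starRingEnd ℂ) (v c) - (starRingEnd ℂ) (v s)) +
          (u c - u s) * (starRingEnd ℂ) (v s) := by
      simp only [hw]; ring
    have t1 : ‖u c‖ * ‖(starRingEnd ℂ) (v c) - (starRingEnd ℂ) (v s)‖ ≤
        (W12norm u / Real.sqrt 2) * (Real.sqrt ε * Real.sqrt |y| * W12norm v) := by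
      have hcn : ‖(starRingEnd ℂ) (v c) - (starRingEnd ℂ) (v s)‖ = ‖v s - v c‖ := by
        rw [← map_sub, RCLike.norm_conj, norm_sub_rev]
      rw [hcn]
      refine mul_le_mul (hSu c) (hv_h.trans ?_) (norm_nonneg _) (by positivity)
      exact mul_le_mul_of_nonneg_left hBv e0
    have t2 : ‖u c - u s‖ * ‖(starRingEnd ℂ) (v s)‖ ≤
        (Real.sqrt ε * Real.sqrt |y| * W12norm u) * (W12norm v / Real.sqrt 2) := by
      rw [RCLike.norm_conj]
      have hu_h' : ‖u c - u s‖ ≤ Real.sqrt ε * Real.sqrt |y| *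
          Real.sqrt (∫ t : ℝ, ‖deriv u t‖ ^ 2) := by
        rw [norm_sub_rev]; exact hu_h
      refine mul_le_mul (hu_h'.trans ?_) (hSv s) (norm_nonneg _) (by positivity)
      exact mul_le_mul_of_nonneg_left hBu e0
    have h22 : Real.sqrt 2 * Real.sqrt 2 = 2 := Real.mul_self_sqrt (by norm_num)
    have hs2 : Real.sqrt 2 ≠ 0 := by positivity
    calc ‖w c - w s‖
        ≤ ‖u c * ((starRingEnd ℂ) (v c) - (starRingEnd ℂ) (v s))‖ +
            ‖(u c - u s) * (starRingEnd ℂ) (v s)‖ := by rw [hdecomp]; exact norm_add_le _ _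
      _ = ‖u c‖ * ‖(starRingEnd ℂ) (v c) - (starRingEnd ℂ) (v s)‖ +
            ‖u c - u s‖ * ‖(starRingEnd ℂ) (v s)‖ := by rw [norm_mul, norm_mul]
      _ ≤ (W12norm u / Real.sqrt 2) * (Real.sqrt ε * Real.sqrt |y| * W12norm v) +
            (Real.sqrt ε * Real.sqrt |y| * W12norm u) * (W12norm v / Real.sqrt 2) :=
          add_le_add t1 t2
      _ = Real.sqrt 2 * Real.sqrt ε * Real.sqrt |y| * (W12norm u * W12norm v) := by
          rw [div_mul_eq_mul_div, mul_div_assoc', ← add_div, div_eq_iff hs2]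
          linear_combination (-(Real.sqrt ε * Real.sqrt |y| * W12norm u * W12norm v)) * h22
  -- change of variables
  set F : ℝ → ℂ := fun y => ((Vj y : ℝ) : ℂ) * w (c + ε * y) with hF
  have hiF : Integrable F := by
    have h1 : Integrable (fun y => ((Vj y : ℝ) : ℂ)) := hV1.ofReal
    have haff : Continuous fun y : ℝ => w (c + ε * y) :=
      hwcont.comp (continuous_const.add (continuous_const.mul continuous_id))
    have h2 := h1.bdd_mul haff.aestronglyMeasurable
      (ae_of_all _ fun y => hwbd _)
    exact h2.congr (ae_of_all _ fun y => mul_comm _ _)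
  have hcv : ((1 / ε : ℝ) : ℂ) *
      (∫ x : ℝ, ((Vj ((x - c) / ε) : ℝ) : ℂ) * u x * (starRingEnd ℂ) (v x)) = ∫ y : ℝ, F y := by
    have h1 : ∀ x : ℝ, ((Vj ((x - c) / ε) : ℝ) : ℂ) * u x * (starRingEnd ℂ) (v x)
        = F ((x - c) / ε) := by
      intro x
      have hxx : c + ε * ((x - c) / ε) = x := by field_simp; ring
      rw [hF]
      simp only [hxx, hw]
      ring
    rw [show (∫ x : ℝ, ((Vj ((x - c) / ε) : ℝ) : ℂ) * u x * (starRingEnd ℂ) (v x))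
        = ∫ x : ℝ, F ((x - c) / ε) by exact integral_congr_ae (ae_of_all _ h1)]
    rw [show (∫ x : ℝ, F ((x - c) / ε)) = ∫ x : ℝ, (fun z => F (z / ε)) (x - c) from rfl]
    rw [integral_sub_right_eq_self (fun z => F (z / ε)) c]
    rw [MeasureTheory.Measure.integral_comp_div F ε, abs_of_pos hε]
    rw [Complex.real_smul]
    rw [← mul_assoc, ← Complex.ofReal_mul]
    rw [show (1 / ε) * ε = 1 by field_simp]
    simp
  have hiconst : Integrable (fun y => ((Vj y : ℝ) : ℂ) * w c) := hV1.ofReal.mul_const _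
  have hconst_int : (∫ y : ℝ, ((Vj y : ℝ) : ℂ) * w c) = w c := by
    rw [integral_mul_const]
    have hoi : (∫ y : ℝ, ((Vj y : ℝ) : ℂ)) = ((1 : ℝ) : ℂ) := by
      rw [← hVnorm]
      exact integral_ofReal
    rw [hoi]
    simp
  have hTrep : w c - (∫ y : ℝ, F y) = ∫ y : ℝ, ((Vj y : ℝ) : ℂ) * (w c - w (c + ε * y)) := by
    have h1 : (∫ y : ℝ, ((Vj y : ℝ) : ℂ) * (w c - w (c + ε * y)))
        = (∫ y : ℝ, ((Vj y : ℝ) : ℂ) * w c) - ∫ y : ℝ, F y := by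
      rw [← integral_sub hiconst hiF]
      congr 1
      funext y
      rw [hF]
      ring
    rw [h1, hconst_int]
  set K : ℝ := ∫ x : ℝ, |x| ^ ((1 : ℝ) / 2) * |Vj x| with hK
  have hnormT : ‖w c - ∫ y : ℝ, F y‖ ≤
      Real.sqrt 2 * Real.sqrt ε * (W12norm u * W12norm v) * K := by
    rw [hTrep]
    refine (norm_integral_le_integral_norm _).trans ?_
    have hint2 : Integrable (fun y : ℝ =>
        Real.sqrt 2 * Real.sqrt ε * (W12norm u * W12norm v) * (|y| ^ ((1 : ℝ) / 2) * |Vj y|)) :=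
      hVmom.const_mul _
    refine (integral_mono_of_nonneg (ae_of_all _ fun y => norm_nonneg _) hint2
      (ae_of_all _ fun y => ?_)).trans ?_
    · dsimp only
      rw [norm_mul, Complex.norm_real, Real.norm_eq_abs]
      calc |Vj y| * ‖w c - w (c + ε * y)‖
          ≤ |Vj y| * (Real.sqrt 2 * Real.sqrt ε * Real.sqrt |y| * (W12norm u * W12norm v)) :=
            mul_le_mul_of_nonneg_left (key y) (abs_nonneg _)
        _ = Real.sqrt 2 * Real.sqrt ε * (W12norm u * W12norm v) *
              (|y| ^ ((1 : ℝ) / 2) * |Vj y|) := by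
            rw [Real.sqrt_eq_rpow |y|]
            ring
    · rw [integral_const_mul]
  have hgoal1 : u c * (starRingEnd ℂ) (v c) = w c := rfl
  rw [hgoal1, hcv, norm_mul, Complex.norm_real, Real.norm_eq_abs]
  have hKnn : 0 ≤ K := integral_nonneg fun x => by positivity
  calc |2 / β - 1 / a| * ‖w c - ∫ y : ℝ, F y‖
      ≤ |2 / β - 1 / a| * (Real.sqrt 2 * Real.sqrt ε * (W12norm u * W12norm v) * K) :=
        mul_le_mul_of_nonneg_left hnormT (abs_nonneg _)
    _ = Real.sqrt 2 * Real.sqrt ε * |2 / β - 1 / a| * K * W12norm u * W12norm v := by ring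
end

section
/- Let V_{−1}, V₀, V_{+1} : ℝ → ℝ be measurable and square-integrable, each satisfying ∫_ℝ V_j(x) dx = 1 and I_j := ∫_ℝ |x|^{1/2}|V_j(x)| dx < ∞. Let β ∈ ℝ \ {0}, a > 0, ε > 0, and let u, v : ℝ → ℂ be differentiable on ℝ with u, u', v, v' square-integrable. Define t_{a,ε}[u,v] := (β/a²)·( u(0)conj(v(0)) − (1/ε)∫_ℝ V₀(x/ε)u(x)conj(v(x))dx ) + Σ_{j∈{−1,+1}} (2/β − 1/a)·( u(ja)conj(v(ja)) − (1/ε)∫_ℝ V_j((x − ja)/ε)u(x)conj(v(x))dx ). Then |t_{a,ε}[u,v]| ≤ √ε·C(a)·‖u‖_{W^{1,2}}·‖v‖_{W^{1,2}}, where C(a) := √2·( (|β|/a²)·I₀ + |2/β − 1/a|·(I_{−1} + I_{+1}) ). -/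
open MeasureTheory Filter Set Topology

lemma cs_on_set {f : ℝ → ℝ} {s : Set ℝ} (hvol : volume s ≠ ⊤)
    (hfm : AEStronglyMeasurable f (volume.restrict s))
    (hf0 : ∀ x, 0 ≤ f x)
    (hf2 : IntegrableOn (fun x => f x ^ 2) s) :
    ∫ x in s, f x ≤ Real.sqrt (volume s).toReal * Real.sqrt (∫ x in s, f x ^ 2) := by
  haveI : IsFiniteMeasure (volume.restrict s) :=
    ⟨by rw [Measure.restrict_apply_univ]; exact lt_of_le_of_ne le_top hvol⟩
  have hpq : Real.HolderConjugate 2 2 := Real.HolderConjugate.two_two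
  have h1 : MemLp (fun _ : ℝ => (1 : ℝ)) (ENNReal.ofReal 2) (volume.restrict s) := by
    simpa using memLp_const (μ := volume.restrict s) (1 : ℝ)
  have h2 : MemLp f (ENNReal.ofReal 2) (volume.restrict s) := by
    have : MemLp f 2 (volume.restrict s) :=
      (memLp_two_iff_integrable_sq hfm).mpr hf2
    simpa using this
  have := integral_mul_le_Lp_mul_Lq_of_nonneg hpq
    (ae_of_all _ fun _ => zero_le_one) (ae_of_all _ hf0) h1 h2
  simp only [one_mul] at this
  calc ∫ x in s, f x ≤ (∫ _ in s, (1:ℝ) ^ (2:ℝ)) ^ ((1:ℝ)/2) * (∫ x in s, f x ^ (2:ℝ)) ^ ((1:ℝ)/2) := this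
    _ = Real.sqrt (volume s).toReal * Real.sqrt (∫ x in s, f x ^ 2) := by
        rw [← Real.sqrt_eq_rpow, ← Real.sqrt_eq_rpow]
        congr 1
        · simp; rfl
        · congr 1
          refine integral_congr_ae (ae_of_all _ fun x => ?_)
          have : f x ^ (2:ℝ) = f x ^ (2:ℕ) := by
            rw [← Real.rpow_natCast (f x) 2]; norm_num
          simpa using this

lemma increment_aux {u : ℝ → ℂ} (hu : Differentiable ℝ u)
    (hu2' : Integrable (fun x => ‖deriv u x‖ ^ 2)) {c x : ℝ} (h : c ≤ x) :
    ‖u x - u c‖ ≤ Real.sqrt |x - c| * Real.sqrt (∫ t, ‖deriv u t‖ ^ 2) := by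
  have hIoc : volume (Ioc c x) ≠ ⊤ := by
    simp [Real.volume_Ioc]
  have hmeas : AEStronglyMeasurable (deriv u) (volume.restrict (Ioc c x)) :=
    (measurable_deriv u).aestronglyMeasurable
  have hint : IntegrableOn (deriv u) (Ioc c x) := by
    have h1 : IntegrableOn (fun t => 1 + ‖deriv u t‖ ^ 2) (Ioc c x) :=
      ((integrableOn_const_iff (C := (1:ℝ))).mpr (Or.inr (lt_of_le_of_ne le_top hIoc))).add hu2'.integrableOn
    refine Integrable.mono' h1 hmeas (ae_of_all _ fun t => ?_)
    have := norm_nonneg (deriv u t)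
    nlinarith [sq_nonneg (‖deriv u t‖ - 1)]
  have hii : IntervalIntegrable (deriv u) volume c x := by
    rw [intervalIntegrable_iff_integrableOn_Ioc_of_le h]; exact hint
  have hftc : ∫ t in c..x, deriv u t = u x - u c :=
    intervalIntegral.integral_eq_sub_of_hasDerivAt (fun t _ => (hu t).hasDerivAt) hii
  rw [← hftc]
  calc ‖∫ t in c..x, deriv u t‖ ≤ ∫ t in c..x, ‖deriv u t‖ :=
        intervalIntegral.norm_integral_le_integral_norm h
    _ = ∫ t in Ioc c x, ‖deriv u t‖ := by rw [intervalIntegral.integral_of_le h]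
    _ ≤ Real.sqrt (volume (Ioc c x)).toReal * Real.sqrt (∫ t in Ioc c x, ‖deriv u t‖ ^ 2) := by
        exact cs_on_set hIoc hmeas.norm (fun t => norm_nonneg _) hu2'.integrableOn
    _ ≤ Real.sqrt |x - c| * Real.sqrt (∫ t, ‖deriv u t‖ ^ 2) := by
        gcongr Real.sqrt ?_ * Real.sqrt ?_
        · rw [Real.volume_Ioc, ENNReal.toReal_ofReal (by linarith)]
          exact le_abs_self _
        · exact setIntegral_le_integral hu2' (ae_of_all _ fun t => sq_nonneg _)

lemma increment_bound {u : ℝ → ℂ} (hu : Differentiable ℝ u)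
    (hu2' : Integrable (fun x => ‖deriv u x‖ ^ 2)) (c x : ℝ) :
    ‖u x - u c‖ ≤ Real.sqrt |x - c| * Real.sqrt (∫ t, ‖deriv u t‖ ^ 2) := by
  rcases le_total c x with h | h
  · exact increment_aux hu hu2' h
  · rw [norm_sub_rev, abs_sub_comm]
    exact increment_aux hu hu2' h

lemma agmon {u : ℝ → ℂ} (hu : Differentiable ℝ u)
    (hu2 : Integrable (fun x => ‖u x‖ ^ 2))
    (hu2' : Integrable (fun x => ‖deriv u x‖ ^ 2)) (x : ℝ) :
    ‖u x‖ ≤ Real.sqrt (((∫ t, ‖u t‖ ^ 2) + ∫ t, ‖deriv u t‖ ^ 2) / 2) := by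
  set g : ℝ → ℝ := fun t => ‖u t‖ ^ 2 with hgdef
  set g' : ℝ → ℝ := fun t =>
    2 * ((u t).re * (deriv u t).re + (u t).im * (deriv u t).im) with hg'def
  -- derivative
  have hg : ∀ t, HasDerivAt g (g' t) t := by
    intro t
    have hre : HasDerivAt (fun s => (u s).re) ((deriv u t).re) t :=
      (Complex.reCLM.hasFDerivAt.comp_hasDerivAt t (hu t).hasDerivAt)
    have him : HasDerivAt (fun s => (u s).im) ((deriv u t).im) t :=
      (Complex.imCLM.hasFDerivAt.comp_hasDerivAt t (hu t).hasDerivAt)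
    have h1 : HasDerivAt (fun s => (u s).re ^ 2 + (u s).im ^ 2)
        (2 * (u t).re ^ 1 * (deriv u t).re + 2 * (u t).im ^ 1 * (deriv u t).im) t :=
      ((hre.pow 2).add (him.pow 2))
    have heq : (fun s => (u s).re ^ 2 + (u s).im ^ 2) = g := by
      funext s
      show (u s).re ^ 2 + (u s).im ^ 2 = ‖u s‖ ^ 2
      rw [Complex.sq_norm, Complex.normSq_apply]
      ring
    rw [heq] at h1
    convert h1 using 1
    simp [hg'def]; ring
  -- pointwise bound on |g'|
  have hg'bd : ∀ t, |g' t| ≤ 2 * (‖u t‖ * ‖deriv u t‖) := by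
    intro t
    have habs : ∀ z : ℂ, ‖z‖ = Real.sqrt (z.re ^ 2 + z.im ^ 2) := by
      intro z
      rw [Complex.norm_def, Complex.normSq_apply]
      ring_nf
    have key : ((u t).re * (deriv u t).re + (u t).im * (deriv u t).im) ^ 2 ≤
        ((u t).re ^ 2 + (u t).im ^ 2) * ((deriv u t).re ^ 2 + (deriv u t).im ^ 2) := by
      nlinarith [sq_nonneg ((u t).re * (deriv u t).im - (u t).im * (deriv u t).re)]
    have h1 : |(u t).re * (deriv u t).re + (u t).im * (deriv u t).im| ≤ ‖u t‖ * ‖deriv u t‖ := by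
      rw [habs, habs, ← Real.sqrt_mul (by positivity), ← Real.sqrt_sq_eq_abs]
      exact Real.sqrt_le_sqrt key
    calc |g' t| = 2 * |(u t).re * (deriv u t).re + (u t).im * (deriv u t).im| := by
          rw [hg'def]; rw [abs_mul]; norm_num
      _ ≤ 2 * (‖u t‖ * ‖deriv u t‖) := by linarith
  have hg'bd2 : ∀ t, |g' t| ≤ ‖u t‖ ^ 2 + ‖deriv u t‖ ^ 2 := by
    intro t
    refine (hg'bd t).trans ?_
    nlinarith [sq_nonneg (‖u t‖ - ‖deriv u t‖)]
  -- integrability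
  have hgint : Integrable g := hu2
  have hg'meas : AEStronglyMeasurable g' volume := by
    have h1 : Measurable (deriv u) := measurable_deriv u
    have h2 : Measurable u := hu.continuous.measurable
    exact (((Complex.measurable_re.comp h2).mul (Complex.measurable_re.comp h1)).add
      ((Complex.measurable_im.comp h2).mul (Complex.measurable_im.comp h1))).const_mul
      2 |>.aestronglyMeasurable
  have hg'int : Integrable g' := by
    refine Integrable.mono' (hu2.add hu2') hg'meas (ae_of_all _ fun t => ?_)
    simpa using hg'bd2 t
  -- limits at infinity
  have hlimtop : Tendsto g atTop (𝓝 (limUnder atTop g)) :=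
    tendsto_limUnder_of_hasDerivAt_of_integrableOn_Ioi (a := 0)
      (fun t _ => hg t) hg'int.integrableOn
  have hlimbot : Tendsto g atBot (𝓝 (limUnder atBot g)) :=
    tendsto_limUnder_of_hasDerivAt_of_integrableOn_Iic (a := 0)
      (fun t _ => hg t) hg'int.integrableOn
  -- limits are zero
  have hzero : ∀ (l : Filter ℝ) (m : ℝ), l.NeBot → Tendsto g l (𝓝 m) →
      (∀ A : ℝ, volume {t | m / 2 ≤ g t} = ⊤ → False) → True := fun _ _ _ _ _ => trivial
  have key_zero : ∀ m : ℝ, Tendsto g atTop (𝓝 m) → m = 0 := by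
    intro m hm
    have hm0 : 0 ≤ m := ge_of_tendsto hm (Eventually.of_forall fun t => sq_nonneg _)
    rcases hm0.eq_or_lt with h | h
    · exact h.symm
    · exfalso
      have hev : ∀ᶠ t in atTop, m / 2 ≤ g t :=
        hm.eventually (eventually_ge_nhds (by linarith))
      obtain ⟨A, hA⟩ := hev.exists_forall_of_atTop
      have hconst : IntegrableOn (fun _ : ℝ => m / 2) (Ioi A) := by
        refine Integrable.mono' (hgint.integrableOn) aestronglyMeasurable_const ?_
        refine (ae_restrict_iff' measurableSet_Ioi).mpr (ae_of_all _ fun t ht => ?_)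
        rw [Real.norm_of_nonneg (by linarith)]
        exact hA t (le_of_lt ht)
      rw [integrableOn_const_iff] at hconst
      rcases hconst with h' | h'
      · simp at h'; linarith
      · rw [Real.volume_Ioi] at h'; exact (lt_irrefl _ h').elim
  have key_zero_bot : ∀ m : ℝ, Tendsto g atBot (𝓝 m) → m = 0 := by
    intro m hm
    have hm0 : 0 ≤ m := ge_of_tendsto hm (Eventually.of_forall fun t => sq_nonneg _)
    rcases hm0.eq_or_lt with h | h
    · exact h.symm
    · exfalso
      have hev : ∀ᶠ t in atBot, m / 2 ≤ g t :=
        hm.eventually (eventually_ge_nhds (by linarith))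
      obtain ⟨A, hA⟩ := hev.exists_forall_of_atBot
      have hconst : IntegrableOn (fun _ : ℝ => m / 2) (Iio A) := by
        refine Integrable.mono' (hgint.integrableOn) aestronglyMeasurable_const ?_
        refine (ae_restrict_iff' measurableSet_Iio).mpr (ae_of_all _ fun t ht => ?_)
        rw [Real.norm_of_nonneg (by linarith)]
        exact hA t (le_of_lt ht)
      rw [integrableOn_const_iff] at hconst
      rcases hconst with h' | h'
      · simp at h'; linarith
      · rw [Real.volume_Iio] at h'; exact (lt_irrefl _ h').elim
  have htop0 : Tendsto g atTop (𝓝 0) := by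
    have := key_zero _ hlimtop; rwa [this] at hlimtop
  have hbot0 : Tendsto g atBot (𝓝 0) := by
    have := key_zero_bot _ hlimbot; rwa [this] at hlimbot
  -- FTC on half-lines
  have hIoi : ∫ t in Ioi x, g' t = 0 - g x :=
    integral_Ioi_of_hasDerivAt_of_tendsto' (fun t _ => hg t) hg'int.integrableOn htop0
  have hIic : ∫ t in Iic x, g' t = g x - 0 :=
    integral_Iic_of_hasDerivAt_of_tendsto' (fun t _ => hg t) hg'int.integrableOn hbot0
  -- combine
  have habs_int : Integrable (fun t => |g' t|) := hg'int.abs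
  have h1 : ∫ t in Iic x, g' t ≤ ∫ t in Iic x, |g' t| :=
    setIntegral_mono hg'int.integrableOn habs_int.integrableOn fun t => le_abs_self _
  have h2 : - ∫ t in Ioi x, g' t ≤ ∫ t in Ioi x, |g' t| := by
    rw [← integral_neg]
    exact setIntegral_mono hg'int.neg.integrableOn habs_int.integrableOn fun t =>
      neg_le_abs _
  have hsplit : (∫ t in Iic x, |g' t|) + ∫ t in Ioi x, |g' t| = ∫ t, |g' t| :=
    intervalIntegral.integral_Iic_add_Ioi habs_int.integrableOn habs_int.integrableOn
  have habs_le : ∫ t, |g' t| ≤ (∫ t, ‖u t‖ ^ 2) + ∫ t, ‖deriv u t‖ ^ 2 := by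
    rw [← integral_add hu2 hu2']
    exact integral_mono habs_int (hu2.add hu2') fun t => hg'bd2 t
  have hgx : 2 * g x ≤ (∫ t, ‖u t‖ ^ 2) + ∫ t, ‖deriv u t‖ ^ 2 := by
    have e1 : g x = ∫ t in Iic x, g' t := by linarith [hIic]
    have e2 : g x = - ∫ t in Ioi x, g' t := by linarith [hIoi]
    nlinarith [h1, h2, hsplit, habs_le]
  have : ‖u x‖ = Real.sqrt (g x) := (Real.sqrt_sq (norm_nonneg _)).symm
  rw [this]
  exact Real.sqrt_le_sqrt (by linarith)

set_option maxHeartbeats 1000000 in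
lemma center_est {W : ℝ → ℝ} (hWm : Measurable W)
    (hWnorm : (∫ x : ℝ, W x) = 1)
    (hWmom : Integrable (fun x => |x| ^ ((1 : ℝ) / 2) * |W x|))
    {ε : ℝ} (hε : 0 < ε) (c : ℝ)
    {u v : ℝ → ℂ} (hu : Differentiable ℝ u) (hv : Differentiable ℝ v)
    (hu2 : Integrable (fun x => ‖u x‖ ^ 2))
    (hu2' : Integrable (fun x => ‖deriv u x‖ ^ 2))
    (hv2 : Integrable (fun x => ‖v x‖ ^ 2))
    (hv2' : Integrable (fun x => ‖deriv v x‖ ^ 2)) :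
    ‖u c * (starRingEnd ℂ) (v c) -
        ((1 / ε : ℝ) : ℂ) *
          ∫ x : ℝ, ((W ((x - c) / ε) : ℝ) : ℂ) * u x * (starRingEnd ℂ) (v x)‖ ≤
      Real.sqrt ε * (Real.sqrt 2 * (∫ x : ℝ, |x| ^ ((1 : ℝ) / 2) * |W x|)) *
        W12norm u * W12norm v := by
  have hεne : ε ≠ 0 := ne_of_gt hε
  set Su := ∫ t : ℝ, ‖u t‖ ^ 2 with hSu
  set Su' := ∫ t : ℝ, ‖deriv u t‖ ^ 2 with hSu'
  set Sv := ∫ t : ℝ, ‖v t‖ ^ 2 with hSv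
  set Sv' := ∫ t : ℝ, ‖deriv v t‖ ^ 2 with hSv'
  have hSu0 : 0 ≤ Su := integral_nonneg fun t => sq_nonneg _
  have hSu'0 : 0 ≤ Su' := integral_nonneg fun t => sq_nonneg _
  have hSv0 : 0 ≤ Sv := integral_nonneg fun t => sq_nonneg _
  have hSv'0 : 0 ≤ Sv' := integral_nonneg fun t => sq_nonneg _
  have hWu : W12norm u = Real.sqrt (Su + Su') := rfl
  have hWv : W12norm v = Real.sqrt (Sv + Sv') := rfl
  set Wu := W12norm u with hWudef
  set Wv := W12norm v with hWvdef
  have hWu0 : 0 ≤ Wu := Real.sqrt_nonneg _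
  have hWv0 : 0 ≤ Wv := Real.sqrt_nonneg _
  have hs2 : Real.sqrt ((Su + Su') / 2) = Wu / Real.sqrt 2 := by
    rw [Real.sqrt_div (by linarith : (0:ℝ) ≤ Su + Su'), hWu]
  have hs2v : Real.sqrt ((Sv + Sv') / 2) = Wv / Real.sqrt 2 := by
    rw [Real.sqrt_div (by linarith : (0:ℝ) ≤ Sv + Sv'), hWv]
  have hBu : ∀ x, ‖u x‖ ≤ Wu / Real.sqrt 2 := fun x => hs2 ▸ agmon hu hu2 hu2' x
  have hBv : ∀ x, ‖v x‖ ≤ Wv / Real.sqrt 2 := fun x => hs2v ▸ agmon hv hv2 hv2' x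
  have hNu' : Real.sqrt Su' ≤ Wu := by rw [hWu]; exact Real.sqrt_le_sqrt (by linarith)
  have hNv' : Real.sqrt Sv' ≤ Wv := by rw [hWv]; exact Real.sqrt_le_sqrt (by linarith)
  set K := Real.sqrt 2 * Wu * Wv with hK
  have hK0 : 0 ≤ K := by positivity
  have h22 : Real.sqrt 2 * Real.sqrt 2 = 2 := Real.mul_self_sqrt (by norm_num)
  have hs2pos : (0:ℝ) < Real.sqrt 2 := by positivity
  set Kc : ℂ := u c * (starRingEnd ℂ) (v c) with hKc
  set φ : ℝ → ℂ := fun x => u x * (starRingEnd ℂ) (v x) with hφ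
  -- pointwise estimate
  have key : Real.sqrt Su' * (Wv / Real.sqrt 2) + Wu / Real.sqrt 2 * Real.sqrt Sv' ≤ K := by
    have a1 : Real.sqrt Su' * Wv ≤ Wu * Wv := mul_le_mul_of_nonneg_right hNu' hWv0
    have a2 : Wu * Real.sqrt Sv' ≤ Wu * Wv := mul_le_mul_of_nonneg_left hNv' hWu0
    have e : Real.sqrt Su' * (Wv / Real.sqrt 2) + Wu / Real.sqrt 2 * Real.sqrt Sv'
        = (Real.sqrt Su' * Wv + Wu * Real.sqrt Sv') / Real.sqrt 2 := by ring
    rw [e, div_le_iff₀ hs2pos]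
    have hKs : K * Real.sqrt 2 = 2 * (Wu * Wv) := by
      calc K * Real.sqrt 2 = Real.sqrt 2 * Real.sqrt 2 * (Wu * Wv) := by rw [hK]; ring
        _ = 2 * (Wu * Wv) := by rw [h22]
    rw [hKs]; linarith
  have hpt : ∀ x, ‖Kc - φ x‖ ≤ Real.sqrt |x - c| * K := by
    intro x
    have e : Kc - φ x = (u c - u x) * (starRingEnd ℂ) (v c)
        + u x * ((starRingEnd ℂ) (v c) - (starRingEnd ℂ) (v x)) := by
      rw [hKc, hφ]; ring
    have b1 : ‖u c - u x‖ ≤ Real.sqrt |c - x| * Real.sqrt Su' := increment_bound hu hu2' x c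
    have b2 : ‖v c - v x‖ ≤ Real.sqrt |c - x| * Real.sqrt Sv' := increment_bound hv hv2' x c
    calc ‖Kc - φ x‖ ≤ ‖(u c - u x) * (starRingEnd ℂ) (v c)‖
          + ‖u x * ((starRingEnd ℂ) (v c) - (starRingEnd ℂ) (v x))‖ := by
          rw [e]; exact norm_add_le _ _
      _ = ‖u c - u x‖ * ‖v c‖ + ‖u x‖ * ‖v c - v x‖ := by
          rw [norm_mul, norm_mul, RCLike.norm_conj, ← map_sub, RCLike.norm_conj]
      _ ≤ (Real.sqrt |c - x| * Real.sqrt Su') * (Wv / Real.sqrt 2)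
            + (Wu / Real.sqrt 2) * (Real.sqrt |c - x| * Real.sqrt Sv') :=
          add_le_add (mul_le_mul b1 (hBv c) (norm_nonneg _) (by positivity))
            (mul_le_mul (hBu x) b2 (norm_nonneg _) (div_nonneg hWu0 hs2pos.le))
      _ = Real.sqrt |x - c| * (Real.sqrt Su' * (Wv / Real.sqrt 2)
            + Wu / Real.sqrt 2 * Real.sqrt Sv') := by
          rw [abs_sub_comm c x]; ring
      _ ≤ Real.sqrt |x - c| * K := mul_le_mul_of_nonneg_left key (Real.sqrt_nonneg _)
  -- integrability and change of variables
  have hW1 : Integrable W := by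
    by_contra h
    rw [integral_undef h] at hWnorm
    norm_num at hWnorm
  have iW : Integrable (fun x => W ((x - c) / ε)) :=
    (hW1.comp_div hεne).comp_sub_right c
  have valW : (∫ x : ℝ, W ((x - c) / ε)) = ε := by
    have h1 : (∫ x : ℝ, W ((x - c) / ε)) = ∫ y : ℝ, W (y / ε) :=
      integral_sub_right_eq_self (fun y => W (y / ε)) c
    rw [h1, MeasureTheory.Measure.integral_comp_div W ε, hWnorm, abs_of_pos hε]
    simp
  set I := ∫ x : ℝ, |x| ^ ((1 : ℝ) / 2) * |W x| with hI
  have hI0 : 0 ≤ I :=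
    integral_nonneg fun x => mul_nonneg (Real.rpow_nonneg (abs_nonneg _) _) (abs_nonneg _)
  set h : ℝ → ℝ := fun y => Real.sqrt |y| * |W y| with hh
  have hheq : ∀ y, |y| ^ ((1 : ℝ) / 2) * |W y| = h y := fun y => by
    rw [hh, ← Real.sqrt_eq_rpow]
  have hhint : Integrable h := hWmom.congr (ae_of_all _ fun y => hheq y)
  have ih : Integrable (fun x => h ((x - c) / ε)) :=
    (hhint.comp_div hεne).comp_sub_right c
  have valh : (∫ x : ℝ, h ((x - c) / ε)) = ε * I := by
    have h1 : (∫ x : ℝ, h ((x - c) / ε)) = ∫ y : ℝ, h (y / ε) :=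
      integral_sub_right_eq_self (fun y => h (y / ε)) c
    have h2 : (∫ y : ℝ, h y) = I := by
      rw [hI]
      exact integral_congr_ae (ae_of_all _ fun y => (hheq y).symm)
    rw [h1, MeasureTheory.Measure.integral_comp_div h ε, h2, abs_of_pos hε, smul_eq_mul]
  -- complex-valued pieces
  set Wc : ℝ → ℂ := fun x => ((W ((x - c) / ε) : ℝ) : ℂ) with hWcdef
  have iWC : Integrable Wc := iW.ofReal
  have hφm : AEStronglyMeasurable φ volume := by
    apply Continuous.aestronglyMeasurable
    exact hu.continuous.mul (continuous_star.comp hv.continuous)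
  have hφbdd : ∀ x, ‖φ x‖ ≤ Wu / Real.sqrt 2 * (Wv / Real.sqrt 2) := by
    intro x
    rw [hφ]
    calc ‖u x * (starRingEnd ℂ) (v x)‖ = ‖u x‖ * ‖v x‖ := by
          rw [norm_mul, RCLike.norm_conj]
      _ ≤ Wu / Real.sqrt 2 * (Wv / Real.sqrt 2) :=
          mul_le_mul (hBu x) (hBv x) (norm_nonneg _) (div_nonneg hWu0 hs2pos.le)
  have iF : Integrable (fun x => Wc x * φ x) := by
    have h1 : Integrable (fun x => φ x * Wc x) :=
      Integrable.bdd_mul iWC hφm (ae_of_all _ hφbdd)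
    exact h1.congr (ae_of_all _ fun x => mul_comm _ _)
  have hWcInt : (∫ x, Wc x) = (ε : ℂ) := by
    have h0 : (∫ x : ℝ, ((W ((x - c) / ε) : ℝ) : ℂ)) = ((ε : ℝ) : ℂ) := by
      have h1 := ContinuousLinearMap.integral_comp_comm Complex.ofRealCLM iW
      simp only [Complex.ofRealCLM_apply] at h1
      rw [h1, valW]
    exact h0
  have iG : Integrable (fun x => Wc x * (Kc - φ x)) := by
    have h1 : Integrable (fun x => Wc x * Kc) := iWC.mul_const Kc
    exact (h1.sub iF).congr (ae_of_all _ fun x => by simp only [Pi.sub_apply]; ring)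
  have keyeq : Kc - ((1 / ε : ℝ) : ℂ) * (∫ x, Wc x * φ x)
      = ((1 / ε : ℝ) : ℂ) * ∫ x, Wc x * (Kc - φ x) := by
    have h1 : Integrable (fun x => Wc x * Kc) := iWC.mul_const Kc
    have e1 : (∫ x, Wc x * (Kc - φ x)) = (∫ x, Wc x * Kc) - ∫ x, Wc x * φ x := by
      rw [← integral_sub h1 iF]
      exact integral_congr_ae (ae_of_all _ fun x => by simp only [Pi.sub_apply]; ring)
    have e2 : (∫ x, Wc x * Kc) = (ε : ℂ) * Kc := by
      rw [integral_mul_const, hWcInt]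
    rw [e1, e2]
    have hεC : (ε : ℂ) ≠ 0 := by exact_mod_cast hεne
    push_cast
    field_simp
  -- norm estimate
  have hGbd : ∀ x, ‖Wc x * (Kc - φ x)‖ ≤ Real.sqrt ε * K * h ((x - c) / ε) := by
    intro x
    rw [norm_mul]
    have h1 : ‖Wc x‖ = |W ((x - c) / ε)| := by
      rw [hWcdef]; exact (Complex.norm_real _).trans (Real.norm_eq_abs _)
    have h3 : Real.sqrt |x - c| = Real.sqrt ε * Real.sqrt |(x - c) / ε| := by
      rw [← Real.sqrt_mul hε.le]
      congr 1
      rw [abs_div, abs_of_pos hε]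
      field_simp
    calc ‖Wc x‖ * ‖Kc - φ x‖ ≤ |W ((x - c) / ε)| * (Real.sqrt |x - c| * K) := by
          rw [h1]
          exact mul_le_mul_of_nonneg_left (hpt x) (abs_nonneg _)
      _ = Real.sqrt ε * K * (Real.sqrt |(x - c) / ε| * |W ((x - c) / ε)|) := by
          rw [h3]; ring
      _ = Real.sqrt ε * K * h ((x - c) / ε) := rfl
  have hnorm : ‖∫ x, Wc x * (Kc - φ x)‖ ≤ Real.sqrt ε * K * (ε * I) := by
    have hmaj : Integrable (fun x => Real.sqrt ε * K * h ((x - c) / ε)) := ih.const_mul _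
    calc ‖∫ x, Wc x * (Kc - φ x)‖ ≤ ∫ x, Real.sqrt ε * K * h ((x - c) / ε) :=
          norm_integral_le_of_norm_le hmaj (ae_of_all _ hGbd)
      _ = Real.sqrt ε * K * (ε * I) := by rw [integral_const_mul, valh]
  -- assemble
  have hintg : (∫ x : ℝ, ((W ((x - c) / ε) : ℝ) : ℂ) * u x * (starRingEnd ℂ) (v x))
      = ∫ x, Wc x * φ x := integral_congr_ae (ae_of_all _ fun x => mul_assoc _ _ _)
  have hcoef : ‖((1 / ε : ℝ) : ℂ)‖ = 1 / ε := by
    rw [Complex.norm_real]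
    exact abs_of_pos (by positivity)
  calc ‖u c * (starRingEnd ℂ) (v c) - ((1 / ε : ℝ) : ℂ) *
          ∫ x : ℝ, ((W ((x - c) / ε) : ℝ) : ℂ) * u x * (starRingEnd ℂ) (v x)‖
      = ‖((1 / ε : ℝ) : ℂ)‖ * ‖∫ x, Wc x * (Kc - φ x)‖ := by
        rw [hintg, ← hKc, keyeq, norm_mul]
    _ ≤ (1 / ε) * (Real.sqrt ε * K * (ε * I)) := by
        rw [hcoef]
        exact mul_le_mul_of_nonneg_left hnorm (by positivity)
    _ = Real.sqrt ε * (Real.sqrt 2 * I) * Wu * Wv := by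
        rw [hK]; field_simp

theorem stmt14 (Vm V₀ Vp : ℝ → ℝ)
    (hVmm : Measurable Vm) (hV0m : Measurable V₀) (hVpm : Measurable Vp)
    (hVm2 : Integrable (fun x => (Vm x) ^ 2))
    (hV02 : Integrable (fun x => (V₀ x) ^ 2))
    (hVp2 : Integrable (fun x => (Vp x) ^ 2))
    (hVmnorm : (∫ x : ℝ, Vm x) = 1)
    (hV0norm : (∫ x : ℝ, V₀ x) = 1)
    (hVpnorm : (∫ x : ℝ, Vp x) = 1)
    (hVmmom : Integrable (fun x => |x| ^ ((1 : ℝ) / 2) * |Vm x|))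
    (hV0mom : Integrable (fun x => |x| ^ ((1 : ℝ) / 2) * |V₀ x|))
    (hVpmom : Integrable (fun x => |x| ^ ((1 : ℝ) / 2) * |Vp x|))
    (β a ε : ℝ) (hβ : β ≠ 0) (ha : 0 < a) (hε : 0 < ε)
    (u v : ℝ → ℂ) (hu : Differentiable ℝ u) (hv : Differentiable ℝ v)
    (hu2 : Integrable (fun x => ‖u x‖ ^ 2))
    (hu2' : Integrable (fun x => ‖deriv u x‖ ^ 2))
    (hv2 : Integrable (fun x => ‖v x‖ ^ 2))
    (hv2' : Integrable (fun x => ‖deriv v x‖ ^ 2)) :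
    ‖((β / a ^ 2 : ℝ) : ℂ) *
          (u 0 * (starRingEnd ℂ) (v 0) -
            ((1 / ε : ℝ) : ℂ) *
              ∫ x : ℝ, ((V₀ (x / ε) : ℝ) : ℂ) * u x * (starRingEnd ℂ) (v x)) +
        ((2 / β - 1 / a : ℝ) : ℂ) *
          (u (-1 * a) * (starRingEnd ℂ) (v (-1 * a)) -
            ((1 / ε : ℝ) : ℂ) *
              ∫ x : ℝ, ((Vm ((x - -1 * a) / ε) : ℝ) : ℂ) * u x * (starRingEnd ℂ) (v x)) +
        ((2 / β - 1 / a : ℝ) : ℂ) *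
          (u (1 * a) * (starRingEnd ℂ) (v (1 * a)) -
            ((1 / ε : ℝ) : ℂ) *
              ∫ x : ℝ, ((Vp ((x - 1 * a) / ε) : ℝ) : ℂ) * u x * (starRingEnd ℂ) (v x))‖ ≤
      Real.sqrt ε *
        (Real.sqrt 2 *
          ((|β| / a ^ 2) * (∫ x : ℝ, |x| ^ ((1 : ℝ) / 2) * |V₀ x|) +
            |2 / β - 1 / a| *
              ((∫ x : ℝ, |x| ^ ((1 : ℝ) / 2) * |Vm x|) +
                (∫ x : ℝ, |x| ^ ((1 : ℝ) / 2) * |Vp x|)))) *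
        W12norm u * W12norm v := by
  have h0 := center_est hV0m hV0norm hV0mom hε 0 hu hv hu2 hu2' hv2 hv2'
  simp only [sub_zero] at h0
  have hm := center_est hVmm hVmnorm hVmmom hε (-1 * a) hu hv hu2 hu2' hv2 hv2'
  have hp := center_est hVpm hVpnorm hVpmom hε (1 * a) hu hv hu2 hu2' hv2 hv2'
  have n1 : ‖((β / a ^ 2 : ℝ) : ℂ)‖ = |β| / a ^ 2 := by
    rw [Complex.norm_real, Real.norm_eq_abs, abs_div, abs_of_pos (pow_pos ha 2)]
  have n2 : ‖((2 / β - 1 / a : ℝ) : ℂ)‖ = |2 / β - 1 / a| := by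
    rw [Complex.norm_real, Real.norm_eq_abs]
  have c1 : (0:ℝ) ≤ |β| / a ^ 2 := by positivity
  have c2 : (0:ℝ) ≤ |2 / β - 1 / a| := abs_nonneg _
  calc ‖_ + _ + _‖ ≤ ‖((β / a ^ 2 : ℝ) : ℂ) *
          (u 0 * (starRingEnd ℂ) (v 0) -
            ((1 / ε : ℝ) : ℂ) *
              ∫ x : ℝ, ((V₀ (x / ε) : ℝ) : ℂ) * u x * (starRingEnd ℂ) (v x))‖ +
        ‖((2 / β - 1 / a : ℝ) : ℂ) *
          (u (-1 * a) * (starRingEnd ℂ) (v (-1 * a)) -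
            ((1 / ε : ℝ) : ℂ) *
              ∫ x : ℝ, ((Vm ((x - -1 * a) / ε) : ℝ) : ℂ) * u x * (starRingEnd ℂ) (v x))‖ +
        ‖((2 / β - 1 / a : ℝ) : ℂ) *
          (u (1 * a) * (starRingEnd ℂ) (v (1 * a)) -
            ((1 / ε : ℝ) : ℂ) *
              ∫ x : ℝ, ((Vp ((x - 1 * a) / ε) : ℝ) : ℂ) * u x * (starRingEnd ℂ) (v x))‖ :=
        norm_add₃_le
    _ ≤ (|β| / a ^ 2) *
          (Real.sqrt ε * (Real.sqrt 2 * (∫ x : ℝ, |x| ^ ((1 : ℝ) / 2) * |V₀ x|)) *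
            W12norm u * W12norm v) +
        |2 / β - 1 / a| *
          (Real.sqrt ε * (Real.sqrt 2 * (∫ x : ℝ, |x| ^ ((1 : ℝ) / 2) * |Vm x|)) *
            W12norm u * W12norm v) +
        |2 / β - 1 / a| *
          (Real.sqrt ε * (Real.sqrt 2 * (∫ x : ℝ, |x| ^ ((1 : ℝ) / 2) * |Vp x|)) *
            W12norm u * W12norm v) := by
        rw [norm_mul, norm_mul, norm_mul, n1, n2]
        exact add_le_add (add_le_add (mul_le_mul_of_nonneg_left h0 c1)
          (mul_le_mul_of_nonneg_left hm c2)) (mul_le_mul_of_nonneg_left hp c2)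
    _ = _ := by ring
end

section
/- Fix κ > 0, β ∈ ℝ \ {0}, and α ∈ ℝ with α ≠ 1. With u(a) := 2βκa/(2a − β), v(a) := 2κa²/β, w(a) := e^{−κa}, define D_α(a) := (w² − 1 − αu)·[(1 + αu)(1 + αv) − w²(1 − αv)]/(2κ) and N_α(a) := (w² + w^{−2})·[w² − (1 + αu)(1 + αv)] + 2αw²v + (w² − 1 − αu)·(αu − 1 − w²). Then there exist C > 0 and a₀ ∈ (0, |β|/2) such that for all a ∈ (0, a₀): |D_α(a) + 2κ(1 − α)²·a²| ≤ C·a³ and |N_α(a) + 4κ²(1 − α)²·a²| ≤ C·a³; i.e., D_α(a) = −2κ(1 − α)²a² + O(a³) and N_α(a) = −4κ²(1 − α)²a² + O(a³) as a → 0⁺. -/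
/-- The denominator `D_α(a)` for the disbalanced triple-δ resolvent computation. -/
noncomputable def DAFun (β κ α a : ℝ) : ℝ :=
  ((wFun κ a) ^ 2 - 1 - α * uFun β κ a) *
    ((1 + α * uFun β κ a) * (1 + α * vFun β κ a) -
      (wFun κ a) ^ 2 * (1 - α * vFun β κ a)) / (2 * κ)

/-- The numerator `N_α(a)` for the disbalanced triple-δ resolvent computation. -/
noncomputable def NAFun (β κ α a : ℝ) : ℝ :=
  ((wFun κ a) ^ 2 + (wFun κ a)⁻¹ ^ 2) *
      ((wFun κ a) ^ 2 - (1 + α * uFun β κ a) * (1 + α * vFun β κ a)) +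
    2 * α * (wFun κ a) ^ 2 * vFun β κ a +
    ((wFun κ a) ^ 2 - 1 - α * uFun β κ a) * (α * uFun β κ a - 1 - (wFun κ a) ^ 2)

/-- Normalized third-order remainder of `e^{−2κa}`. -/
noncomputable def s1Fun (κ a : ℝ) : ℝ :=
  (Real.exp (-(2 * κ) * a) - (1 - 2 * κ * a + 2 * κ ^ 2 * a ^ 2)) / a ^ 3

/-- Normalized third-order remainder of `e^{2κa}`. -/
noncomputable def s2Fun (κ a : ℝ) : ℝ :=
  (Real.exp ((2 * κ) * a) - (1 + 2 * κ * a + 2 * κ ^ 2 * a ^ 2)) / a ^ 3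

/-- Normalized second-order remainder of `u`. -/
noncomputable def s3Fun (β κ a : ℝ) : ℝ := 8 * κ / (β * (2 * a - β))

noncomputable def RD (β κ α a x z : ℝ) : ℝ :=
  ((-1:ℝ) * a ^ 3 * x ^ 2 +
    (2:ℝ) * α * a ^ 3 * x * z +
    (-1:ℝ) * α ^ 2 * a ^ 3 * z ^ 2 +
    (4:ℝ) * κ * a * x +
    (-4:ℝ) * κ * α * a * z +
    (-4:ℝ) * κ * α * a * x +
    (-4:ℝ) * κ * α * β⁻¹ * a ^ 2 * x +
    (2:ℝ) * κ * α * β⁻¹ * a ^ 5 * x ^ 2 +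
    (4:ℝ) * κ * α ^ 2 * a * z +
    (4:ℝ) * κ * α ^ 2 * β⁻¹ * a ^ 2 * z +
    (-2:ℝ) * κ * α ^ 3 * β⁻¹ * a ^ 5 * z ^ 2 +
    (-4:ℝ) * κ ^ 2 * a ^ 2 * x +
    (4:ℝ) * κ ^ 2 * α * a ^ 2 * z +
    (8:ℝ) * κ ^ 2 * α * β⁻¹ +
    (-8:ℝ) * κ ^ 2 * α * β⁻¹ * a ^ 3 * x +
    (-8:ℝ) * κ ^ 2 * α ^ 2 * β⁻¹ +
    (8:ℝ) * κ ^ 2 * α ^ 3 * β⁻¹ * a ^ 3 * z +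
    (16:ℝ) * κ ^ 2 * α ^ 3 * β⁻¹ ^ 2 * a ^ 4 * z +
    (8:ℝ) * κ ^ 3 +
    (-8:ℝ) * κ ^ 3 * α +
    (8:ℝ) * κ ^ 3 * α * β⁻¹ * a ^ 4 * x +
    (-8:ℝ) * κ ^ 3 * α ^ 3 * β⁻¹ * a +
    (-32:ℝ) * κ ^ 3 * α ^ 3 * β⁻¹ ^ 2 * a ^ 2 +
    (-32:ℝ) * κ ^ 3 * α ^ 3 * β⁻¹ ^ 3 * a ^ 3 +
    (-4:ℝ) * κ ^ 4 * a +
    (-16:ℝ) * κ ^ 4 * α * β⁻¹ * a ^ 2 +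
    (8:ℝ) * κ ^ 5 * α * β⁻¹ * a ^ 3) / (2 * κ)

noncomputable def RN (β κ α a x y z : ℝ) : ℝ :=
  (1:ℝ) * a ^ 3 * x * y +
    (-1:ℝ) * α * a ^ 3 * y * z +
    (1:ℝ) * α * a ^ 3 * x * z +
    (-1:ℝ) * α ^ 2 * a ^ 3 * z ^ 2 +
    (-2:ℝ) * κ * a * y +
    (2:ℝ) * κ * a * x +
    (-4:ℝ) * κ * α * a * z +
    (2:ℝ) * κ * α * a * y +
    (-2:ℝ) * κ * α * a * x +
    (2:ℝ) * κ * α * β⁻¹ * a ^ 2 * y +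
    (-2:ℝ) * κ * α * β⁻¹ * a ^ 2 * x +
    (4:ℝ) * κ * α ^ 2 * a * z +
    (4:ℝ) * κ * α ^ 2 * β⁻¹ * a ^ 2 * z +
    (-2:ℝ) * κ * α ^ 2 * β⁻¹ * a ^ 5 * y * z +
    (-2:ℝ) * κ * α ^ 2 * β⁻¹ * a ^ 5 * x * z +
    (2:ℝ) * κ ^ 2 * a ^ 2 * y +
    (2:ℝ) * κ ^ 2 * a ^ 2 * x +
    (8:ℝ) * κ ^ 2 * α * β⁻¹ +
    (-8:ℝ) * κ ^ 2 * α ^ 2 * β⁻¹ +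
    (4:ℝ) * κ ^ 2 * α ^ 2 * β⁻¹ * a ^ 3 * y +
    (4:ℝ) * κ ^ 2 * α ^ 2 * β⁻¹ * a ^ 3 * x +
    (8:ℝ) * κ ^ 2 * α ^ 2 * β⁻¹ ^ 2 * a ^ 4 * y +
    (8:ℝ) * κ ^ 2 * α ^ 2 * β⁻¹ ^ 2 * a ^ 4 * x +
    (-8:ℝ) * κ ^ 3 * α ^ 2 * β⁻¹ * a ^ 4 * z +
    (4:ℝ) * κ ^ 4 * a +
    (16:ℝ) * κ ^ 4 * α ^ 2 * β⁻¹ * a ^ 2 +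
    (32:ℝ) * κ ^ 4 * α ^ 2 * β⁻¹ ^ 2 * a ^ 3

set_option maxHeartbeats 2000000 in
lemma D_id (β κ α a : ℝ) (hκ : κ ≠ 0) (hβ : β ≠ 0) (ha : a ≠ 0) (h2 : 2 * a - β ≠ 0) :
    DAFun β κ α a + 2 * κ * (1 - α) ^ 2 * a ^ 2 =
      a ^ 3 * RD β κ α a (s1Fun κ a) (s3Fun β κ a) := by
  have ht : Real.exp (-κ * a) ≠ 0 := (Real.exp_pos _).ne'
  have hE : Real.exp (-(2 * κ) * a) = Real.exp (-κ * a) ^ 2 := by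
    rw [sq, ← Real.exp_add]; ring_nf
  simp only [DAFun, uFun, vFun, wFun, RD, s1Fun, s3Fun, hE]
  generalize Real.exp (-κ * a) = E at *
  field_simp
  ring

set_option maxHeartbeats 2000000 in
lemma N_id (β κ α a : ℝ) (hκ : κ ≠ 0) (hβ : β ≠ 0) (ha : a ≠ 0) (h2 : 2 * a - β ≠ 0) :
    NAFun β κ α a + 4 * κ ^ 2 * (1 - α) ^ 2 * a ^ 2 =
      a ^ 3 * RN β κ α a (s1Fun κ a) (s2Fun κ a) (s3Fun β κ a) := by
  have ht : Real.exp (-κ * a) ≠ 0 := (Real.exp_pos _).ne'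
  have hE : Real.exp (-(2 * κ) * a) = Real.exp (-κ * a) ^ 2 := by
    rw [sq, ← Real.exp_add]; ring_nf
  have hF : Real.exp ((2 * κ) * a) = (Real.exp (-κ * a))⁻¹ ^ 2 := by
    rw [← Real.exp_neg, sq, ← Real.exp_add]; ring_nf
  simp only [NAFun, uFun, vFun, wFun, RN, s1Fun, s2Fun, s3Fun, hE, hF]
  generalize Real.exp (-κ * a) = E at *
  field_simp
  ring

lemma s1_bound (κ a : ℝ) (hκ : 0 < κ) (ha : 0 < a) (h : 2 * κ * a ≤ 1) :
    |s1Fun κ a| ≤ 8 * κ ^ 3 := by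
  have hx : |(-(2 * κ) * a)| ≤ 1 := by
    rw [abs_of_nonpos (by nlinarith)]; linarith
  have hb := Real.exp_bound hx (n := 3) (by norm_num)
  rw [show (Finset.range 3) = {0, 1, 2} by rfl] at hb
  simp [Finset.sum_insert, Finset.mem_insert] at hb
  have h3 : (2 * |κ| * |a|) ^ 3 = 8 * κ ^ 3 * a ^ 3 := by
    rw [abs_of_pos hκ, abs_of_pos ha]; ring
  have h4 : ((Nat.factorial 3 : ℝ) * 3) = 18 := by norm_num [Nat.factorial]
  rw [h3, h4] at hb
  have hnum : |Real.exp (-(2 * κ) * a) - (1 - 2 * κ * a + 2 * κ ^ 2 * a ^ 2)| ≤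
      8 * κ ^ 3 * a ^ 3 := by
    have e1 : -(2 * κ) * a = -(2 * κ * a) := by ring
    have e2 : (1 : ℝ) - 2 * κ * a + 2 * κ ^ 2 * a ^ 2 =
        1 + (-(2 * κ * a) + (2 * κ * a) ^ 2 / 2) := by ring
    rw [e1, e2]
    nlinarith [hb, pow_pos hκ 3, pow_pos ha 3]
  rw [s1Fun, abs_div, abs_of_pos (pow_pos ha 3), div_le_iff₀ (pow_pos ha 3)]
  nlinarith [pow_pos hκ 3, pow_pos ha 3]

lemma s2_bound (κ a : ℝ) (hκ : 0 < κ) (ha : 0 < a) (h : 2 * κ * a ≤ 1) :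
    |s2Fun κ a| ≤ 8 * κ ^ 3 := by
  have hx : |((2 * κ) * a)| ≤ 1 := by
    rw [abs_of_nonneg (by nlinarith)]; linarith
  have hb := Real.exp_bound hx (n := 3) (by norm_num)
  rw [show (Finset.range 3) = {0, 1, 2} by rfl] at hb
  simp [Finset.sum_insert, Finset.mem_insert] at hb
  have h3 : (2 * |κ| * |a|) ^ 3 = 8 * κ ^ 3 * a ^ 3 := by
    rw [abs_of_pos hκ, abs_of_pos ha]; ring
  have h4 : ((Nat.factorial 3 : ℝ) * 3) = 18 := by norm_num [Nat.factorial]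
  rw [h3, h4] at hb
  have hnum : |Real.exp ((2 * κ) * a) - (1 + 2 * κ * a + 2 * κ ^ 2 * a ^ 2)| ≤
      8 * κ ^ 3 * a ^ 3 := by
    have e2 : (1 : ℝ) + 2 * κ * a + 2 * κ ^ 2 * a ^ 2 =
        1 + (2 * κ * a + (2 * κ * a) ^ 2 / 2) := by ring
    rw [e2]
    nlinarith [hb, pow_pos hκ 3, pow_pos ha 3]
  rw [s2Fun, abs_div, abs_of_pos (pow_pos ha 3), div_le_iff₀ (pow_pos ha 3)]
  nlinarith [pow_pos hκ 3, pow_pos ha 3]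

lemma s3_bound (β κ a : ℝ) (hκ : 0 < κ) (hβ : β ≠ 0) (ha : 0 < a) (h : a < |β| / 4) :
    |s3Fun β κ a| ≤ 16 * κ / β ^ 2 := by
  have hβ0 : 0 < |β| := abs_pos.mpr hβ
  have hsub : |β| / 2 ≤ |2 * a - β| := by
    have h1 : |β| - |2 * a| ≤ |β - 2 * a| := abs_sub_abs_le_abs_sub β (2 * a)
    have h2 : |β - 2 * a| = |2 * a - β| := abs_sub_comm _ _
    have h3 : |2 * a| = 2 * a := abs_of_pos (by linarith)
    linarith [h1, h2 ▸ h1]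
  have hden : β ^ 2 / 2 ≤ |β * (2 * a - β)| := by
    rw [abs_mul]
    nlinarith [sq_abs β, abs_nonneg (2 * a - β)]
  have hdenpos : (0 : ℝ) < |β * (2 * a - β)| := by nlinarith [sq_nonneg β, sq_abs β]
  rw [s3Fun, abs_div, abs_of_pos (by linarith : (0:ℝ) < 8 * κ)]
  rw [div_le_iff₀ hdenpos]
  have hb2 : (0 : ℝ) < β ^ 2 := by positivity
  have key : 16 * κ / β ^ 2 * (β ^ 2 / 2) = 8 * κ := by field_simp; ring
  calc (8 : ℝ) * κ = 16 * κ / β ^ 2 * (β ^ 2 / 2) := key.symm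
    _ ≤ 16 * κ / β ^ 2 * |β * (2 * a - β)| := by
        apply mul_le_mul_of_nonneg_left hden (by positivity)

theorem stmt16 (β κ α : ℝ) (hκ : 0 < κ) (hβ : β ≠ 0) (hα : α ≠ 1) :
    ∃ C > (0 : ℝ), ∃ a₀ : ℝ, 0 < a₀ ∧ a₀ < |β| / 2 ∧
      ∀ a : ℝ, 0 < a → a < a₀ →
        |DAFun β κ α a + 2 * κ * (1 - α) ^ 2 * a ^ 2| ≤ C * a ^ 3 ∧
        |NAFun β κ α a + 4 * κ ^ 2 * (1 - α) ^ 2 * a ^ 2| ≤ C * a ^ 3 := by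
  have hβ0 : 0 < |β| := abs_pos.mpr hβ
  -- the compact box
  set K1 : ℝ := 8 * κ ^ 3 with hK1
  set K3 : ℝ := 16 * κ / β ^ 2 with hK3
  set box : Set (ℝ × ℝ × ℝ × ℝ) :=
    Set.Icc 0 1 ×ˢ Set.Icc (-K1) K1 ×ˢ Set.Icc (-K1) K1 ×ˢ Set.Icc (-K3) K3 with hbox
  have hboxc : IsCompact box :=
    (isCompact_Icc.prod (isCompact_Icc.prod (isCompact_Icc.prod isCompact_Icc)))
  have hcontD : ContinuousOn (fun p : ℝ × ℝ × ℝ × ℝ => RD β κ α p.1 p.2.1 p.2.2.2) box := by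
    apply Continuous.continuousOn
    unfold RD
    fun_prop
  have hcontN : ContinuousOn (fun p : ℝ × ℝ × ℝ × ℝ =>
      RN β κ α p.1 p.2.1 p.2.2.1 p.2.2.2) box := by
    apply Continuous.continuousOn
    unfold RN
    fun_prop
  obtain ⟨C1, hC1⟩ := hboxc.exists_bound_of_continuousOn hcontD
  obtain ⟨C2, hC2⟩ := hboxc.exists_bound_of_continuousOn hcontN
  refine ⟨|C1| + |C2| + 1, by positivity, min (|β| / 4) (min (1 / (2 * κ)) 1), ?_, ?_, ?_⟩
  · have : (0:ℝ) < 1 / (2 * κ) := by positivity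
    simp only [lt_min_iff]
    refine ⟨by positivity, this, one_pos⟩
  · calc min (|β| / 4) (min (1 / (2 * κ)) 1) ≤ |β| / 4 := min_le_left _ _
      _ < |β| / 2 := by linarith
  · intro a ha haa
    have ha1 : a < |β| / 4 := lt_of_lt_of_le haa (min_le_left _ _)
    have ha2 : a < 1 / (2 * κ) := lt_of_lt_of_le haa ((min_le_right _ _).trans (min_le_left _ _))
    have ha3 : a ≤ 1 := le_of_lt (lt_of_lt_of_le haa ((min_le_right _ _).trans (min_le_right _ _)))
    have hka : 2 * κ * a ≤ 1 := by
      rw [lt_div_iff₀ (by positivity : (0:ℝ) < 2 * κ)] at ha2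
      nlinarith [ha2]
    have h2aβ : 2 * a - β ≠ 0 := by
      intro hc
      have : |2 * a - β| = 0 := by rw [hc]; exact abs_zero
      have hsub : |β| / 2 ≤ |2 * a - β| := by
        have h1 : |β| - |2 * a| ≤ |β - 2 * a| := abs_sub_abs_le_abs_sub β (2 * a)
        have h2 : |β - 2 * a| = |2 * a - β| := abs_sub_comm _ _
        have h3 : |2 * a| = 2 * a := abs_of_pos (by linarith)
        linarith [h2 ▸ h1]
      linarith
    have hmem : (a, s1Fun κ a, s2Fun κ a, s3Fun β κ a) ∈ box := by
      refine ⟨⟨le_of_lt ha, ha3⟩, ?_, ?_, ?_⟩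
      · exact abs_le.mp (s1_bound κ a hκ ha hka)
      · exact abs_le.mp (s2_bound κ a hκ ha hka)
      · exact abs_le.mp (s3_bound β κ a hκ hβ ha ha1)
    have hD := hC1 _ hmem
    have hN := hC2 _ hmem
    rw [Real.norm_eq_abs] at hD hN
    have ha3p : (0:ℝ) < a ^ 3 := pow_pos ha 3
    constructor
    · rw [D_id β κ α a (ne_of_gt hκ) hβ (ne_of_gt ha) h2aβ, abs_mul,
        abs_of_pos ha3p]
      calc a ^ 3 * |RD β κ α a (s1Fun κ a) (s3Fun β κ a)| ≤ a ^ 3 * C1 := by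
            exact mul_le_mul_of_nonneg_left hD (le_of_lt ha3p)
        _ ≤ (|C1| + |C2| + 1) * a ^ 3 := by
            have : C1 ≤ |C1| + |C2| + 1 := by
              have := le_abs_self C1
              have := abs_nonneg C2
              linarith
            nlinarith
    · rw [N_id β κ α a (ne_of_gt hκ) hβ (ne_of_gt ha) h2aβ, abs_mul,
        abs_of_pos ha3p]
      calc a ^ 3 * |RN β κ α a (s1Fun κ a) (s2Fun κ a) (s3Fun β κ a)| ≤ a ^ 3 * C2 := by
            exact mul_le_mul_of_nonneg_left hN (le_of_lt ha3p)
        _ ≤ (|C1| + |C2| + 1) * a ^ 3 := by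
            have : C2 ≤ |C1| + |C2| + 1 := by
              have := le_abs_self C2
              have := abs_nonneg C1
              linarith
            nlinarith
end
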